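/- arXiv:1112.4530 — 6 statements merged into one kernel-verified Lean document; each statement's English description precedes it below -/
import Mathlib

section
/- Let 0 < q < p with p + q = 1 and 0 < γ < q. Then p·log((p-γ)/(p+γ)) + q·log((q+γ)/(q-γ)) > 0. That is, the expected logarithmic score of the forecast (p-γ, q+γ) is strictly smaller than that of (p+γ, q-γ), so the logarithmic scoring rule prefers the forecast erring toward the less likely outcome. -/
open Real

/-- The logarithmic scoring rule prefers the binary forecast erring toward the
less likely outcome: the expected log score of (p-γ, q+γ) is strictly smaller
than that of (p+γ, q-γ). -/
theorem log_score_prefers_cautious (p q γ : ℝ) (hq : 0 < q) (hqp : q < p)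
    (hpq : p + q = 1) (hγ0 : 0 < γ) (hγ : γ < q) :
    (0 < p * Real.log ((p - γ) / (p + γ)) + q * Real.log ((q + γ) / (q - γ)))
    ∧ (-p * Real.log (p - γ) - q * Real.log (q + γ)
        < -p * Real.log (p + γ) - q * Real.log (q - γ)) := by
  have hp : 0 < q := hq
  have hp' : 0 < p := hq.trans hqp
  set F : ℝ → ℝ := fun x => p * Real.log (p - x) - p * Real.log (p + x)
    + q * Real.log (q + x) - q * Real.log (q - x) with hF
  have hcont : ContinuousOn F (Set.Icc 0 γ) := by
    have h1 : ∀ x ∈ Set.Icc (0:ℝ) γ, p - x ≠ 0 := by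
      intro x hx; have := hx.2; nlinarith [hx.1]
    have h2 : ∀ x ∈ Set.Icc (0:ℝ) γ, p + x ≠ 0 := by
      intro x hx; nlinarith [hx.1]
    have h3 : ∀ x ∈ Set.Icc (0:ℝ) γ, q + x ≠ 0 := by
      intro x hx; nlinarith [hx.1]
    have h4 : ∀ x ∈ Set.Icc (0:ℝ) γ, q - x ≠ 0 := by
      intro x hx; have := hx.2; nlinarith [hx.1]
    exact (((((continuousOn_const.sub continuousOn_id).log h1).const_smul p).sub
      (((continuousOn_const.add continuousOn_id).log h2).const_smul p)).add
      (((continuousOn_const.add continuousOn_id).log h3).const_smul q)).sub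
      (((continuousOn_const.sub continuousOn_id).log h4).const_smul q)
  have hmono : StrictMonoOn F (Set.Icc 0 γ) := by
    apply strictMonoOn_of_deriv_pos (convex_Icc 0 γ) hcont
    intro x hx
    rw [interior_Icc] at hx
    obtain ⟨hx0, hxγ⟩ := hx
    have hxq : x < q := hxγ.trans hγ
    have hxp : x < p := hxq.trans hqp
    have hpm : (0:ℝ) < p - x := by linarith
    have hpp : (0:ℝ) < p + x := by linarith
    have hqp2 : (0:ℝ) < q + x := by linarith
    have hqm : (0:ℝ) < q - x := by linarith
    have hA : HasDerivAt (fun y => Real.log (p - y)) (-1 / (p - x)) x := by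
      have : HasDerivAt (fun y : ℝ => p - y) (-1) x := by
        simpa [Pi.sub_def] using (hasDerivAt_const x p).sub (hasDerivAt_id x)
      exact this.log hpm.ne'
    have hB : HasDerivAt (fun y => Real.log (p + y)) (1 / (p + x)) x := by
      have : HasDerivAt (fun y : ℝ => p + y) 1 x := by
        simpa [Pi.add_def] using (hasDerivAt_const x p).add (hasDerivAt_id x)
      exact this.log hpp.ne'
    have hC : HasDerivAt (fun y => Real.log (q + y)) (1 / (q + x)) x := by
      have : HasDerivAt (fun y : ℝ => q + y) 1 x := by
        simpa [Pi.add_def] using (hasDerivAt_const x q).add (hasDerivAt_id x)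
      exact this.log hqp2.ne'
    have hD : HasDerivAt (fun y => Real.log (q - y)) (-1 / (q - x)) x := by
      have : HasDerivAt (fun y : ℝ => q - y) (-1) x := by
        simpa [Pi.sub_def] using (hasDerivAt_const x q).sub (hasDerivAt_id x)
      exact this.log hqm.ne'
    have hFd : HasDerivAt F
        (p * (-1 / (p - x)) - p * (1 / (p + x)) + q * (1 / (q + x)) - q * (-1 / (q - x))) x :=
      (((hA.const_mul p).sub (hB.const_mul p)).add (hC.const_mul q)).sub (hD.const_mul q)
    rw [hFd.deriv]
    have heq : p * (-1 / (p - x)) - p * (1 / (p + x)) + q * (1 / (q + x)) - q * (-1 / (q - x))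
        = 2 * x ^ 2 * (p ^ 2 - q ^ 2) / ((p - x) * (p + x) * ((q + x) * (q - x))) := by
      field_simp
      ring
    rw [heq]
    have hd : 0 < p ^ 2 - q ^ 2 := by nlinarith
    have hnum : 0 < 2 * x ^ 2 * (p ^ 2 - q ^ 2) := by positivity
    have hden : 0 < (p - x) * (p + x) * ((q + x) * (q - x)) := by positivity
    exact div_pos hnum hden
  have key : 0 < F γ := by
    have h0 : F 0 = 0 := by simp [hF]
    have := hmono (Set.left_mem_Icc.2 hγ0.le) (Set.right_mem_Icc.2 hγ0.le) hγ0
    rw [h0] at this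
    exact this
  have hpm : (0:ℝ) < p - γ := by linarith
  have hpp : (0:ℝ) < p + γ := by linarith
  have hqp2 : (0:ℝ) < q + γ := by linarith
  have hqm : (0:ℝ) < q - γ := by linarith
  have keyx : 0 < p * Real.log (p - γ) - p * Real.log (p + γ)
      + q * Real.log (q + γ) - q * Real.log (q - γ) := key
  constructor
  · rw [Real.log_div hpm.ne' hpp.ne', Real.log_div hqp2.ne' hqm.ne']
    linarith
  · linarith
end

section
/- Let 0 < q < p with p + q = 1 and 0 < γ < q. With C(γ) = ⟨(p+γ, q-γ), (p,q)⟩ / (‖(p,q)‖₂ ‖(p+γ, q-γ)‖₂), one has C(γ) > C(-γ). Consequently the expected spherical score of the lower-entropy forecast f₊ = (p+γ, q-γ) is strictly smaller (better) than that of f₋ = (p-γ, q+γ). -/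
open Real

/-- The cosine of the angle with the truth is larger for (p+γ, q-γ) than for
(p-γ, q+γ); consequently the spherical score prefers the lower-entropy
forecast f₊ = (p+γ, q-γ). -/
theorem spherical_prefers_lower_entropy (p q γ : ℝ) (hq : 0 < q) (hqp : q < p)
    (hpq : p + q = 1) (hγ0 : 0 < γ) (hγ : γ < q) :
    (((p + γ) * p + (q - γ) * q)
        / (Real.sqrt (p^2 + q^2) * Real.sqrt ((p + γ)^2 + (q - γ)^2))
      > ((p + -γ) * p + (q - -γ) * q)
        / (Real.sqrt (p^2 + q^2) * Real.sqrt ((p + -γ)^2 + (q - -γ)^2)))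
    ∧ (-(((p + γ) * p + (q - γ) * q) / Real.sqrt ((p + γ)^2 + (q - γ)^2))
        < -(((p - γ) * p + (q + γ) * q) / Real.sqrt ((p - γ)^2 + (q + γ)^2))) := by
  have hp : 0 < p := hq.trans hqp
  have hrw : (p + -γ)^2 + (q - -γ)^2 = (p - γ)^2 + (q + γ)^2 := by ring
  rw [hrw]
  set a := Real.sqrt ((p + γ)^2 + (q - γ)^2) with ha
  set b := Real.sqrt ((p - γ)^2 + (q + γ)^2) with hb
  set s := Real.sqrt (p^2 + q^2) with hs
  have ha0 : 0 < a := Real.sqrt_pos.mpr (by nlinarith)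
  have hb0 : 0 < b := Real.sqrt_pos.mpr (by nlinarith)
  have hs0 : 0 < s := Real.sqrt_pos.mpr (by positivity)
  have ha2 : a ^ 2 = (p + γ)^2 + (q - γ)^2 := Real.sq_sqrt (by nlinarith)
  have hb2 : b ^ 2 = (p - γ)^2 + (q + γ)^2 := Real.sq_sqrt (by nlinarith)
  have hAm : 0 < (p + -γ) * p + (q - -γ) * q := by nlinarith
  have hAp : 0 < (p + γ) * p + (q - γ) * q := by nlinarith
  have key : ((p + -γ) * p + (q - -γ) * q) * a < ((p + γ) * p + (q - γ) * q) * b := by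
    have h2 : (((p + -γ) * p + (q - -γ) * q) * a) ^ 2
        < (((p + γ) * p + (q - γ) * q) * b) ^ 2 := by
      rw [mul_pow, mul_pow, ha2, hb2]
      have hid : ((p + γ) * p + (q - γ) * q) ^ 2 * ((p - γ) ^ 2 + (q + γ) ^ 2)
          - ((p + -γ) * p + (q - -γ) * q) ^ 2 * ((p + γ) ^ 2 + (q - γ) ^ 2)
          = 4 * γ ^ 3 * (p - q) * (p + q) ^ 2 := by ring
      have hpos : 0 < 4 * γ ^ 3 * (p - q) * (p + q) ^ 2 := by
        have h1 := mul_pos (pow_pos hγ0 3) (sub_pos.mpr hqp)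
        rw [hpq]; nlinarith [h1]
      linarith [hid, hpos]
    exact lt_of_pow_lt_pow_left₀ 2 (mul_nonneg hAp.le hb0.le) h2
  constructor
  · rw [gt_iff_lt, div_lt_div_iff₀ (by positivity) (by positivity)]
    calc ((p + -γ) * p + (q - -γ) * q) * (s * a) = s * (((p + -γ) * p + (q - -γ) * q) * a) := by ring
      _ < s * (((p + γ) * p + (q - γ) * q) * b) := by
          exact mul_lt_mul_of_pos_left key hs0
      _ = ((p + γ) * p + (q - γ) * q) * (s * b) := by ring
  · rw [neg_lt_neg_iff, div_lt_div_iff₀ hb0 ha0]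
    have e : ((p - γ) * p + (q + γ) * q) * a = ((p + -γ) * p + (q - -γ) * q) * a := by ring
    rw [e]; exact key
end

section
/- Let p be a probability density on ℝ with p(-x) ≥ p(x) for all x ≥ 0 (equivalently p(|x|) ≤ p(x)), and let γ be an odd integrable function (γ(-x) = -γ(x)) with γ(x) ≤ 0 for x ≥ 0 and |γ(x)| < p(x) for all x. Then ∫ p(x) log((p(x) - γ(x)) / (p(x) + γ(x))) dx ≥ 0. That is, the expected logarithmic score of the density forecast f₋ = p - γ is at most that of f₊ = p + γ. -/
open MeasureTheory Real

private lemma lemA : ∀ u : ℝ, 0 ≤ u → u < 1 →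
    Real.log ((1 + u) / (1 - u)) ≤ 2 * u / (1 - u ^ 2) := by
  intro u hu0 hu1
  set h : ℝ → ℝ := fun v => 2 * v / (1 - v ^ 2) - Real.log (1 + v) + Real.log (1 - v) with hh
  have key : ∀ v ∈ Set.Ioo (-1 : ℝ) 1, HasDerivAt h (4 * v ^ 2 / (1 - v ^ 2) ^ 2) v := by
    intro v hv
    have hv1 : (1 : ℝ) + v ≠ 0 := by nlinarith [hv.1, hv.2]
    have hv2 : (1 : ℝ) - v ≠ 0 := by nlinarith [hv.1, hv.2]
    have hv3 : (1 : ℝ) - v ^ 2 ≠ 0 := by nlinarith [hv.1, hv.2]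
    have d1 : HasDerivAt (fun v : ℝ => 2 * v / (1 - v ^ 2))
        ((2 * (1 - v ^ 2) - 2 * v * (-(2 * v))) / (1 - v ^ 2) ^ 2) v := by
      have := ((hasDerivAt_id v).const_mul 2).div
        (((hasDerivAt_pow 2 v).const_sub 1)) (by simpa using hv3)
      refine this.congr_deriv ?_
      simp only [id_eq]
      ring
    have d2 : HasDerivAt (fun v : ℝ => Real.log (1 + v)) (1 / (1 + v)) v := by
      simpa using ((hasDerivAt_id v).const_add 1).log hv1
    have d3 : HasDerivAt (fun v : ℝ => Real.log (1 - v)) (-1 / (1 - v)) v := by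
      simpa using ((hasDerivAt_id v).const_sub 1).log hv2
    have := (d1.sub d2).add d3
    refine this.congr_deriv ?_
    field_simp
    ring
  have mono : MonotoneOn h (Set.Ico (0 : ℝ) 1) := by
    apply monotoneOn_of_deriv_nonneg (convex_Ico 0 1)
    · intro v hv
      exact (key v ⟨lt_of_lt_of_le (by norm_num) hv.1, hv.2⟩).continuousAt.continuousWithinAt
    · intro v hv
      rw [interior_Ico] at hv
      exact (key v ⟨lt_of_lt_of_le (by norm_num) hv.1.le, hv.2⟩).differentiableAt.differentiableWithinAt
    · intro v hv
      rw [interior_Ico] at hv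
      rw [(key v ⟨lt_of_lt_of_le (by norm_num) hv.1.le, hv.2⟩).deriv]
      positivity
  have h0 : h 0 = 0 := by simp [hh]
  have hu : h 0 ≤ h u := mono ⟨le_refl 0, by norm_num⟩ ⟨hu0, hu1⟩ hu0
  have h1u : (1 : ℝ) + u ≠ 0 := by linarith
  have h2u : (1 : ℝ) - u ≠ 0 := by linarith
  rw [Real.log_div h1u h2u]
  rw [h0] at hu
  simp only [hh] at hu
  linarith

private lemma lemB : ∀ g a b : ℝ, 0 ≤ g → g < a → a ≤ b →
    b * Real.log ((b + g) / (b - g)) ≤ a * Real.log ((a + g) / (a - g)) := by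
  intro g a b hg0 hga hab
  rcases eq_or_lt_of_le hg0 with hg | hg
  · have ha : a ≠ 0 := by linarith
    have hb : b ≠ 0 := by linarith
    simp [← hg, div_self ha, div_self hb]
  · set Φ : ℝ → ℝ := fun t => t * (Real.log (t + g) - Real.log (t - g)) with hΦ
    have key : ∀ t ∈ Set.Ioi g, HasDerivAt Φ
        ((Real.log (t + g) - Real.log (t - g)) + t * (1 / (t + g) - 1 / (t - g))) t := by
      intro t ht
      simp only [Set.mem_Ioi] at ht
      have h1 : t + g ≠ 0 := by linarith
      have h2 : t - g ≠ 0 := by nlinarith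
      have d2 : HasDerivAt (fun t : ℝ => Real.log (t + g)) (1 / (t + g)) t := by
        simpa using ((hasDerivAt_id t).add_const g).log h1
      have d3 : HasDerivAt (fun t : ℝ => Real.log (t - g)) (1 / (t - g)) t := by
        simpa using ((hasDerivAt_id t).sub_const g).log h2
      have := (hasDerivAt_id t).mul (d2.sub d3)
      refine this.congr_deriv ?_
      simp only [id_eq, one_mul]
      rfl
    have derneg : ∀ t ∈ Set.Ioi g, deriv Φ t ≤ 0 := by
      intro t ht
      simp only [Set.mem_Ioi] at ht
      have ht0 : 0 < t := lt_of_le_of_lt hg0 ht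
      have h1 : (0:ℝ) < t + g := by linarith
      have h2 : (0:ℝ) < t - g := by linarith
      rw [(key t ht).deriv]
      -- apply lemA with u = g / t
      have hu0 : 0 ≤ g / t := div_nonneg hg0 ht0.le
      have hu1 : g / t < 1 := (div_lt_one ht0).mpr ht
      have hA := lemA (g / t) hu0 hu1
      have e1 : (1 + g / t) / (1 - g / t) = (t + g) / (t - g) := by
        field_simp
      have hden : (0:ℝ) < t * ((t + g) * (t - g)) := by positivity
      have e2 : 2 * (g / t) / (1 - (g / t) ^ 2) = 2 * g * t / ((t + g) * (t - g)) := by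
        rw [div_eq_div_iff (by nlinarith) (by positivity)]
        field_simp
        ring
      rw [e1, e2] at hA
      rw [Real.log_div h1.ne' h2.ne'] at hA
      have e3 : t * (1 / (t + g) - 1 / (t - g)) = -(2 * g * t / ((t + g) * (t - g))) := by
        field_simp
        ring
      rw [e3]
      linarith
    have anti : AntitoneOn Φ (Set.Ioi g) := by
      apply antitoneOn_of_deriv_nonpos (convex_Ioi g)
      · intro t ht
        exact (key t ht).continuousAt.continuousWithinAt
      · intro t ht
        rw [interior_Ioi] at ht
        exact (key t ht).differentiableAt.differentiableWithinAt
      · intro t ht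
        rw [interior_Ioi] at ht
        exact derneg t ht
    have := anti (Set.mem_Ioi.mpr hga) (Set.mem_Ioi.mpr (lt_of_lt_of_le hga hab)) hab
    simp only [hΦ] at this
    have ha1 : (0:ℝ) < a + g := by linarith
    have ha2 : (0:ℝ) < a - g := by linarith
    have hb1 : (0:ℝ) < b + g := by linarith
    have hb2 : (0:ℝ) < b - g := by linarith
    rw [Real.log_div ha1.ne' ha2.ne', Real.log_div hb1.ne' hb2.ne']
    exact this

/-- Under the stated symmetry and sign conditions, the logarithmic scoring
rule prefers the density forecast f₋ = p - γ over f₊ = p + γ. -/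
theorem log_score_prefers_higher_entropy_density (p γ : ℝ → ℝ)
    (hp0 : ∀ x, 0 ≤ p x) (hp1 : ∫ x, p x = 1)
    (hsym : ∀ x : ℝ, 0 ≤ x → p x ≤ p (-x))
    (hodd : ∀ x : ℝ, γ (-x) = -γ x)
    (hγneg : ∀ x : ℝ, 0 ≤ x → γ x ≤ 0)
    (hγlt : ∀ x : ℝ, |γ x| < p x)
    (hγint : Integrable γ)
    (hint : Integrable (fun x => p x * Real.log ((p x - γ x) / (p x + γ x))))
    (hintp : Integrable (fun x => p x * Real.log (p x + γ x)))
    (hintm : Integrable (fun x => p x * Real.log (p x - γ x))) :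
    (0 ≤ ∫ x, p x * Real.log ((p x - γ x) / (p x + γ x)))
    ∧ (-(∫ x, p x * Real.log (p x - γ x)) ≤ -(∫ x, p x * Real.log (p x + γ x))) := by
  set F : ℝ → ℝ := fun x => p x * Real.log ((p x - γ x) / (p x + γ x)) with hF
  have hpos : ∀ x, 0 < p x := fun x => lt_of_le_of_lt (abs_nonneg _) (hγlt x)
  have hm : ∀ x, 0 < p x - γ x := by
    intro x
    have := (abs_lt.mp (hγlt x)).2
    linarith
  have hpp : ∀ x, 0 < p x + γ x := by
    intro x
    have := (abs_lt.mp (hγlt x)).1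
    linarith
  have key : ∀ x : ℝ, 0 ≤ x → 0 ≤ F x + F (-x) := by
    intro x hx
    set g := -γ x with hg
    have hg0 : 0 ≤ g := neg_nonneg.mpr (hγneg x hx)
    have hga : g < p x := lt_of_le_of_lt (neg_le_abs _) (hγlt x)
    have hgb : g < p (-x) := by
      have h1 := hγlt (-x)
      rw [hodd x, abs_neg] at h1
      exact lt_of_le_of_lt (neg_le_abs _) h1
    have hab : p x ≤ p (-x) := hsym x hx
    have hB := lemB g (p x) (p (-x)) hg0 hga hab
    have e1 : p x - γ x = p x + g := by rw [hg]; ring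
    have e2 : p x + γ x = p x - g := by rw [hg]; ring
    have e3 : p (-x) - γ (-x) = p (-x) - g := by rw [hodd x, hg]
    have e4 : p (-x) + γ (-x) = p (-x) + g := by rw [hodd x, hg]
    have e5 : Real.log ((p (-x) - g) / (p (-x) + g)) =
        -Real.log ((p (-x) + g) / (p (-x) - g)) := by
      rw [← Real.log_inv, inv_div]
    simp only [hF, e1, e2, e3, e4, e5, mul_neg]
    linarith [hB]
  have hG : ∀ x : ℝ, 0 ≤ F x + F (-x) := by
    intro x
    rcases le_total 0 x with h | h
    · exact key x h
    · have := key (-x) (neg_nonneg.mpr h)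
      rw [neg_neg] at this
      linarith
  have hFneg : Integrable (fun x => F (-x)) := hint.comp_neg
  have h1 : ∫ x, F (-x) = ∫ x, F x := integral_neg_eq_self F _
  have h3 : ∫ x, (F x + F (-x)) = (∫ x, F x) + ∫ x, F (-x) := integral_add hint hFneg
  have h2 : 0 ≤ ∫ x, (F x + F (-x)) := integral_nonneg hG
  have first : 0 ≤ ∫ x, F x := by
    rw [h3, h1] at h2
    linarith
  have hsplit : ∫ x, F x =
      (∫ x, p x * Real.log (p x - γ x)) - ∫ x, p x * Real.log (p x + γ x) := by
    rw [← integral_sub hintm hintp]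
    congr 1
    funext x
    simp only [hF, Real.log_div (hm x).ne' (hpp x).ne', mul_sub]
  refine ⟨first, ?_⟩
  rw [hsplit] at first
  linarith
end

section
/- Let p be a probability density on ℝ and F its cumulative distribution function P(x) = ∫_{-∞}^x p. For any cumulative distribution function F of a density forecast, the expected Continuous Ranked Probability Score satisfies E[CRPS(F,X)] = ∫ P(x)(1 - P(x)) dx + ∫ (F(x) - P(x))² dx, where X has density p. -/
open MeasureTheory Set

/-- Decomposition of the expected Continuous Ranked Probability Score:
E[CRPS(F,X)] = ∫ P(1-P) + ∫ (F - P)². -/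
theorem expected_CRPS_decomposition (p P F : ℝ → ℝ)
    (hp0 : ∀ x, 0 ≤ p x) (hp1 : ∫ x, p x = 1) (hpInt : Integrable p)
    (hP : ∀ x, P x = ∫ τ in Set.Iic x, p τ)
    (hFmono : Monotone F) (hF0 : Filter.Tendsto F Filter.atBot (nhds 0))
    (hF1 : Filter.Tendsto F Filter.atTop (nhds 1))
    (hint : Integrable (fun x => p x * ((∫ τ in Set.Iic x, (F τ)^2)
        + ∫ τ in Set.Ioi x, (F τ - 1)^2)))
    (hint1 : Integrable (fun x => P x * (1 - P x)))
    (hint2 : Integrable (fun x => (F x - P x)^2)) :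
    (∫ x, p x * ((∫ τ in Set.Iic x, (F τ)^2) + ∫ τ in Set.Ioi x, (F τ - 1)^2))
      = (∫ x, P x * (1 - P x)) + ∫ x, (F x - P x)^2 := by
  classical
  have hFmeas : Measurable F := hFmono.measurable
  have hPmono : Monotone P := by
    intro x y hxy
    rw [hP, hP]
    exact setIntegral_mono_set hpInt.integrableOn (Filter.Eventually.of_forall hp0)
      (HasSubset.Subset.eventuallyLE (Iic_subset_Iic.2 hxy))
  have hPmeas : Measurable P := hPmono.measurable
  have hP0 : ∀ x, 0 ≤ P x := fun x => by
    rw [hP]; exact setIntegral_nonneg measurableSet_Iic fun τ _ => hp0 τ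
  have hPle1 : ∀ x, P x ≤ 1 := fun x => by
    rw [hP, ← hp1]
    exact setIntegral_le_integral hpInt (Filter.Eventually.of_forall hp0)
  -- P is eventually ≤ 1/2 near -∞
  obtain ⟨a, ha⟩ : ∃ a, P a ≤ (1:ℝ)/2 := by
    have h1 : Filter.Tendsto (fun n : ℕ => ∫ x in Iic (-(n:ℝ)), p x) Filter.atTop
        (nhds (∫ x in ⋂ n : ℕ, Iic (-(n:ℝ)), p x)) := by
      refine tendsto_setIntegral_of_antitone (fun n => measurableSet_Iic)
        (fun n m hnm => Iic_subset_Iic.2 (by exact_mod_cast neg_le_neg (by exact_mod_cast hnm)))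
        ⟨0, hpInt.integrableOn⟩
    have h2 : (⋂ n : ℕ, Iic (-(n:ℝ))) = ∅ := by
      ext x
      simp only [mem_iInter, mem_Iic, mem_empty_iff_false, iff_false, not_forall, not_le]
      obtain ⟨n, hn⟩ := exists_nat_gt (-x)
      exact ⟨n, by linarith⟩
    rw [h2] at h1
    simp only [Measure.restrict_empty, integral_zero_measure] at h1
    have := h1.eventually (eventually_le_nhds (by norm_num : (0:ℝ) < 1/2))
    obtain ⟨n, hn⟩ := this.exists
    exact ⟨-(n:ℝ), by rw [hP]; exact hn⟩
  -- P is eventually ≥ 1/2 near +∞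
  obtain ⟨b, hb⟩ : ∃ b, (1:ℝ)/2 ≤ P b := by
    have h1 : Filter.Tendsto (fun n : ℕ => ∫ x in Iic (n:ℝ), p x) Filter.atTop
        (nhds (∫ x in ⋃ n : ℕ, Iic (n:ℝ), p x)) := by
      refine tendsto_setIntegral_of_monotone (fun n => measurableSet_Iic)
        (fun n m hnm => Iic_subset_Iic.2 (by exact_mod_cast hnm)) ?_
      exact hpInt.integrableOn
    have h2 : (⋃ n : ℕ, Iic ((n:ℝ))) = univ := by
      ext x
      simp only [mem_iUnion, mem_Iic, mem_univ, iff_true]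
      obtain ⟨n, hn⟩ := exists_nat_gt x
      exact ⟨n, hn.le⟩
    rw [h2] at h1
    rw [setIntegral_univ, hp1] at h1
    obtain ⟨n, hn⟩ := (h1.eventually (eventually_ge_nhds (by norm_num : (1:ℝ)/2 < 1))).exists
    exact ⟨(n:ℝ), by rw [hP]; exact hn⟩
  -- Integrability of P on Iic x
  have hPIic : ∀ x, IntegrableOn P (Iic x) volume := by
    intro x
    have h1 : IntegrableOn P (Iic a) volume := by
      refine Integrable.mono ((hint1.const_mul 2).integrableOn (s := Iic a))
        hPmeas.aestronglyMeasurable.restrict ?_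
      refine (ae_restrict_iff' measurableSet_Iic).2 (Filter.Eventually.of_forall fun τ hτ => ?_)
      have h2 : P τ ≤ 1/2 := le_trans (hPmono hτ) ha
      have h3 : 0 ≤ P τ := hP0 τ
      rw [Real.norm_eq_abs, Real.norm_eq_abs, abs_of_nonneg h3, abs_of_nonneg (by nlinarith)]
      nlinarith
    have h2 : IntegrableOn P (Icc a (max a x)) volume := by
      refine Measure.integrableOn_of_bounded (M := 1) ?_ hPmeas.aestronglyMeasurable ?_
      · simp [Real.volume_Icc]
      · exact Filter.Eventually.of_forall fun τ =>
          (by rw [Real.norm_eq_abs, abs_of_nonneg (hP0 τ)]; exact hPle1 τ)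
    refine (h1.union h2).mono_set fun τ hτ => ?_
    rcases le_or_gt τ a with h | h
    · exact Or.inl h
    · exact Or.inr ⟨h.le, le_trans hτ (le_max_right a x)⟩
  have hPsqIic : ∀ x, IntegrableOn (fun τ => (P τ)^2) (Iic x) volume := by
    intro x
    refine Integrable.mono (hPIic x) ((hPmeas.pow_const 2).aestronglyMeasurable.restrict) ?_
    refine Filter.Eventually.of_forall fun τ => ?_
    rw [Real.norm_eq_abs, Real.norm_eq_abs, abs_of_nonneg (sq_nonneg _), abs_of_nonneg (hP0 τ)]
    nlinarith [hP0 τ, hPle1 τ]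
  have hF2Iic : ∀ x, IntegrableOn (fun τ => (F τ)^2) (Iic x) volume := by
    intro x
    refine Integrable.mono (((hint2.const_mul 2).integrableOn (s := Iic x)).add
      ((hPsqIic x).const_mul 2)) ((hFmeas.pow_const 2).aestronglyMeasurable.restrict) ?_
    refine Filter.Eventually.of_forall fun τ => ?_
    have h1 : (0:ℝ) ≤ 2 * (F τ - P τ)^2 + 2 * (P τ)^2 := by positivity
    simp only [Real.norm_eq_abs, Pi.add_apply]
    rw [abs_of_nonneg (sq_nonneg _), abs_of_nonneg h1]
    nlinarith [sq_nonneg (F τ - 2 * P τ)]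
  -- Integrability of 1 - P on Ioi x
  have hQIoi : ∀ x, IntegrableOn (fun τ => 1 - P τ) (Ioi x) volume := by
    intro x
    have h1 : IntegrableOn (fun τ => 1 - P τ) (Ici b) volume := by
      refine Integrable.mono ((hint1.const_mul 2).integrableOn (s := Ici b))
        ((measurable_const.sub hPmeas).aestronglyMeasurable.restrict) ?_
      refine (ae_restrict_iff' measurableSet_Ici).2 (Filter.Eventually.of_forall fun τ hτ => ?_)
      have h2 : 1/2 ≤ P τ := le_trans hb (hPmono hτ)
      have h3 : P τ ≤ 1 := hPle1 τ
      rw [Real.norm_eq_abs, Real.norm_eq_abs, abs_of_nonneg (by linarith),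
        abs_of_nonneg (by nlinarith)]
      nlinarith
    have h2 : IntegrableOn (fun τ => 1 - P τ) (Icc (min b x) b) volume := by
      refine Measure.integrableOn_of_bounded (M := 1) ?_
        ((measurable_const.sub hPmeas).aestronglyMeasurable) ?_
      · simp [Real.volume_Icc]
      · exact Filter.Eventually.of_forall fun τ =>
          (by rw [Real.norm_eq_abs, abs_of_nonneg (by linarith [hPle1 τ])]
              linarith [hP0 τ])
    refine (h1.union h2).mono_set fun τ hτ => ?_
    rcases le_or_gt b τ with h | h
    · exact Or.inl h
    · exact Or.inr ⟨le_trans (min_le_right b x) (le_of_lt hτ), h.le⟩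
  have hQsqIoi : ∀ x, IntegrableOn (fun τ => (1 - P τ)^2) (Ioi x) volume := by
    intro x
    refine Integrable.mono (hQIoi x) (((measurable_const.sub hPmeas).pow_const 2).aestronglyMeasurable.restrict) ?_
    refine Filter.Eventually.of_forall fun τ => ?_
    rw [Real.norm_eq_abs, Real.norm_eq_abs, abs_of_nonneg (sq_nonneg _),
      abs_of_nonneg (by linarith [hPle1 τ])]
    nlinarith [hP0 τ, hPle1 τ]
  have hG2Ioi : ∀ x, IntegrableOn (fun τ => (F τ - 1)^2) (Ioi x) volume := by
    intro x
    refine Integrable.mono (((hint2.const_mul 2).integrableOn (s := Ioi x)).add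
      ((hQsqIoi x).const_mul 2))
      (((hFmeas.sub measurable_const).pow_const 2).aestronglyMeasurable.restrict) ?_
    refine Filter.Eventually.of_forall fun τ => ?_
    have h1 : (0:ℝ) ≤ 2 * (F τ - P τ)^2 + 2 * (1 - P τ)^2 := by positivity
    simp only [Real.norm_eq_abs, Pi.add_apply]
    rw [abs_of_nonneg (sq_nonneg _), abs_of_nonneg h1]
    nlinarith [sq_nonneg (F τ - 2 * P τ + 1)]
  -- the CRPS integrand as an if-then-else
  set g : ℝ → ℝ → ℝ := fun x τ => p x * (if τ ≤ x then (F τ)^2 else (F τ - 1)^2) with hg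
  have hgnn : ∀ x τ, 0 ≤ g x τ := fun x τ =>
    mul_nonneg (hp0 x) (by split_ifs <;> positivity)
  have hpw : ∀ x : ℝ, (fun τ => if τ ≤ x then (F τ)^2 else (F τ - 1)^2)
      = (Iic x).piecewise (fun τ => (F τ)^2) (fun τ => (F τ - 1)^2) := by
    intro x; funext τ; by_cases h : τ ≤ x <;> simp [Set.piecewise, mem_Iic, h]
  have hinner_int : ∀ x : ℝ,
      Integrable (fun τ => if τ ≤ x then (F τ)^2 else (F τ - 1)^2) volume := by
    intro x
    rw [hpw x, ← Set.indicator_add_compl_eq_piecewise]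
    refine ((hF2Iic x).integrable_indicator measurableSet_Iic).add
      (IntegrableOn.integrable_indicator ?_ measurableSet_Iic.compl)
    rw [compl_Iic]; exact hG2Ioi x
  have hinner_eq : ∀ x : ℝ, (∫ τ, if τ ≤ x then (F τ)^2 else (F τ - 1)^2)
      = (∫ τ in Iic x, (F τ)^2) + ∫ τ in Ioi x, (F τ - 1)^2 := by
    intro x
    rw [hpw x, integral_piecewise measurableSet_Iic (hF2Iic x)
      (by rw [compl_Iic]; exact hG2Ioi x), compl_Iic]
  have hGmeas : AEStronglyMeasurable (Function.uncurry g) (volume.prod volume) := by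
    refine AEStronglyMeasurable.mul ?_ ?_
    · exact hpInt.1.comp_quasiMeasurePreserving Measure.quasiMeasurePreserving_fst
    · refine (Measurable.ite ?_ ?_ ?_).aestronglyMeasurable
      · exact measurableSet_le measurable_snd measurable_fst
      · exact (hFmeas.comp measurable_snd).pow_const 2
      · exact ((hFmeas.comp measurable_snd).sub measurable_const).pow_const 2
  have hGint : Integrable (Function.uncurry g) (volume.prod volume) := by
    refine (integrable_prod_iff hGmeas).2 ⟨?_, ?_⟩
    · exact Filter.Eventually.of_forall fun x => (hinner_int x).const_mul (p x)
    · have heq : (fun x => ∫ τ, ‖Function.uncurry g (x, τ)‖)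
          = fun x => p x * ((∫ τ in Iic x, (F τ)^2) + ∫ τ in Ioi x, (F τ - 1)^2) := by
        funext x
        have h1 : (∫ τ, ‖Function.uncurry g (x, τ)‖) = ∫ τ, g x τ := by
          congr 1; funext τ; exact Real.norm_of_nonneg (hgnn x τ)
        rw [h1, hg]
        simp only []
        rw [integral_const_mul, hinner_eq x]
      rw [heq]; exact hint
  have step1 : (∫ x, p x * ((∫ τ in Set.Iic x, (F τ)^2) + ∫ τ in Set.Ioi x, (F τ - 1)^2))
      = ∫ x, ∫ τ, g x τ := by
    congr 1; funext x
    rw [hg]; simp only []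
    rw [integral_const_mul, hinner_eq x]
  have step2 : (∫ x, ∫ τ, g x τ) = ∫ τ, ∫ x, g x τ := integral_integral_swap hGint
  have step3 : ∀ τ : ℝ, (∫ x, g x τ) = (1 - P τ) * (F τ)^2 + P τ * (F τ - 1)^2 := by
    intro τ
    have hIci : (∫ x in Ici τ, p x) = 1 - P τ := by
      rw [integral_Ici_eq_integral_Ioi]
      have h := integral_add_compl (μ := volume) (s := Iic τ) measurableSet_Iic hpInt (f := p)
      rw [compl_Iic, hp1] at h
      rw [hP]; linarith
    have hIio : (∫ x in Iio τ, p x) = P τ := by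
      rw [← integral_Iic_eq_integral_Iio, ← hP]
    have hpw2 : (fun x => g x τ)
        = (Ici τ).piecewise (fun x => p x * (F τ)^2) (fun x => p x * (F τ - 1)^2) := by
      funext x; by_cases h : τ ≤ x <;> simp [hg, Set.piecewise, mem_Ici, h]
    rw [hpw2, integral_piecewise measurableSet_Ici
      (hpInt.mul_const _).integrableOn (hpInt.mul_const _).integrableOn, compl_Ici,
      integral_mul_const, integral_mul_const, hIci, hIio]
  have step4 : (∫ τ, ∫ x, g x τ) = ∫ τ, (P τ * (1 - P τ) + (F τ - P τ)^2) := by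
    congr 1; funext τ; rw [step3 τ]; ring
  rw [step1, step2, step4, integral_add hint1 hint2]
end

section
/- Let p be a probability density with CDF P, and let f₁ = p + γ and f₂ = p - γ be two density forecasts with ∫γ = 0, having CDFs F₁ = P + Γ and F₂ = P - Γ where Γ(x) = ∫_{-∞}^x γ. Then E[CRPS(F₁,X)] = E[CRPS(F₂,X)]; i.e., the CRPS does not distinguish forecasts whose errors from the target density differ only by sign. -/
open MeasureTheory Set
open scoped ENNReal NNReal

namespace CRPSaux

lemma mono_primitive {f : ℝ → ℝ} (hf : Integrable f) (h0 : ∀ x, 0 ≤ f x) :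
    Monotone (fun x => ∫ τ in Iic x, f τ) := by
  intro a b hab
  exact setIntegral_mono_set hf.integrableOn
    (ae_of_all _ fun x => h0 x) (HasSubset.Subset.eventuallyLE (Iic_subset_Iic.2 hab))

lemma measurable_primitive {f : ℝ → ℝ} (hf : Integrable f) :
    Measurable (fun x => ∫ τ in Iic x, f τ) := by
  have hfp : Integrable (fun τ => max (f τ) 0) := by simpa using hf.pos_part
  have hfn : Integrable (fun τ => max (-f τ) 0) := by simpa using hf.neg.pos_part
  have h1 : Monotone (fun x => ∫ τ in Iic x, max (f τ) 0) :=
    mono_primitive hfp (fun x => le_max_right _ _)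
  have h2 : Monotone (fun x => ∫ τ in Iic x, max (-f τ) 0) :=
    mono_primitive hfn (fun x => le_max_right _ _)
  have : (fun x => ∫ τ in Iic x, f τ)
      = fun x => (∫ τ in Iic x, max (f τ) 0) - ∫ τ in Iic x, max (-f τ) 0 := by
    funext x
    rw [← integral_sub hfp.integrableOn hfn.integrableOn]
    refine setIntegral_congr_fun measurableSet_Iic fun τ _ => ?_
    rcases le_total (f τ) 0 with h | h
    · rw [max_eq_right h, max_eq_left (by linarith : (0:ℝ) ≤ -f τ)]; ring
    · rw [max_eq_left h, max_eq_right (by linarith : -f τ ≤ (0:ℝ))]; ring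
  rw [this]
  exact (h1.measurable).sub h2.measurable

variable {p γ P Γ : ℝ → ℝ}

section basic
variable (hp0 : ∀ x, 0 ≤ p x) (hpInt : Integrable p) (hP : ∀ x, P x = ∫ τ in Iic x, p τ)

include hp0 hpInt hP

lemma monoP : Monotone P := by
  have := mono_primitive hpInt hp0
  intro a b hab; rw [hP a, hP b]; exact this hab

lemma measP : Measurable P := by
  have := measurable_primitive hpInt
  have hPe : P = fun x => ∫ τ in Iic x, p τ := funext hP
  rw [hPe]; exact this

lemma P_nonneg : ∀ x, 0 ≤ P x := fun x => by
  rw [hP x]; exact setIntegral_nonneg measurableSet_Iic fun τ _ => hp0 τ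

lemma P_le_one (hp1 : ∫ x, p x = 1) : ∀ x, P x ≤ 1 := fun x => by
  rw [hP x, ← hp1]
  exact setIntegral_le_integral hpInt (ae_of_all _ hp0)

lemma one_sub_P (hp1 : ∫ x, p x = 1) : ∀ x, 1 - P x = ∫ τ in Ioi x, p τ := fun x => by
  have h := integral_add_compl (measurableSet_Iic : MeasurableSet (Iic x)) hpInt
  rw [compl_Iic] at h
  rw [hP x]; rw [hp1] at h; linarith

end basic


section gamma
variable (hγInt : Integrable γ) (hΓ : ∀ x, Γ x = ∫ τ in Iic x, γ τ)
include hγInt hΓ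

lemma measΓ : Measurable Γ := by
  have := measurable_primitive hγInt
  have : Γ = fun x => ∫ τ in Iic x, γ τ := funext hΓ
  rw [this]; exact measurable_primitive hγInt

lemma Γ_bound : ∀ x, |Γ x| ≤ ∫ t, |γ t| := fun x => by
  rw [hΓ x]
  calc |∫ τ in Iic x, γ τ| ≤ ∫ τ in Iic x, |γ τ| := by
        simpa using norm_integral_le_integral_norm (μ := volume.restrict (Iic x)) γ
    _ ≤ ∫ t, |γ t| := setIntegral_le_integral hγInt.abs (ae_of_all _ fun t => abs_nonneg _)

end gamma

section layercake
variable (hp0 : ∀ x, 0 ≤ p x) (hpInt : Integrable p) (hP : ∀ x, P x = ∫ τ in Iic x, p τ)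
include hp0 hpInt hP

lemma LCleft (a : ℝ) :
    ∫⁻ τ in Iic a, ENNReal.ofReal (P τ)
      = ∫⁻ s, ENNReal.ofReal (p s) * ENNReal.ofReal (a - s) := by
  have hpm : AEMeasurable (fun s => ENNReal.ofReal (p s)) (volume : Measure ℝ) :=
    ENNReal.measurable_ofReal.comp_aemeasurable hpInt.aemeasurable
  have step1 : ∀ τ, ENNReal.ofReal (P τ) = ∫⁻ s in Iic τ, ENNReal.ofReal (p s) := fun τ => by
    rw [hP τ]
    exact ofReal_integral_eq_lintegral_ofReal hpInt.integrableOn (ae_of_all _ hp0)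
  calc ∫⁻ τ in Iic a, ENNReal.ofReal (P τ)
      = ∫⁻ τ in Iic a, ∫⁻ s, (Iic τ).indicator (fun s => ENNReal.ofReal (p s)) s := by
        refine lintegral_congr fun τ => ?_
        rw [step1 τ, lintegral_indicator measurableSet_Iic]
    _ = ∫⁻ s, ∫⁻ τ in Iic a, (Iic τ).indicator (fun s => ENNReal.ofReal (p s)) s := by
        refine lintegral_lintegral_swap ?_
        have : (Function.uncurry fun τ s => (Iic τ).indicator (fun s => ENNReal.ofReal (p s)) s)
            = {z : ℝ × ℝ | z.2 ≤ z.1}.indicator (fun z => ENNReal.ofReal (p z.2)) := by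
          funext z
          simp [Function.uncurry, Set.indicator_apply]
        rw [this]
        exact AEMeasurable.indicator
          (hpm.comp_quasiMeasurePreserving Measure.quasiMeasurePreserving_snd)
          (measurableSet_le measurable_snd measurable_fst)
    _ = ∫⁻ s, ENNReal.ofReal (p s) * ENNReal.ofReal (a - s) := by
        refine lintegral_congr fun s => ?_
        have : ∀ τ, (Iic τ).indicator (fun s => ENNReal.ofReal (p s)) s
            = (Ici s).indicator (fun _ => ENNReal.ofReal (p s)) τ := fun τ => by
          by_cases h : s ≤ τ <;> simp [Set.indicator_apply, h]
        rw [lintegral_congr this, lintegral_indicator measurableSet_Ici,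
          Measure.restrict_restrict measurableSet_Ici, setLIntegral_const,
          Ici_inter_Iic, Real.volume_Icc]

lemma LCright (hp1 : ∫ x, p x = 1) (a : ℝ) :
    ∫⁻ τ in Ioi a, ENNReal.ofReal (1 - P τ)
      = ∫⁻ s, ENNReal.ofReal (p s) * ENNReal.ofReal (s - a) := by
  have hpm : AEMeasurable (fun s => ENNReal.ofReal (p s)) (volume : Measure ℝ) :=
    ENNReal.measurable_ofReal.comp_aemeasurable hpInt.aemeasurable
  have step1 : ∀ τ, ENNReal.ofReal (1 - P τ) = ∫⁻ s in Ioi τ, ENNReal.ofReal (p s) := fun τ => by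
    rw [one_sub_P hp0 hpInt hP hp1 τ]
    exact ofReal_integral_eq_lintegral_ofReal hpInt.integrableOn (ae_of_all _ hp0)
  calc ∫⁻ τ in Ioi a, ENNReal.ofReal (1 - P τ)
      = ∫⁻ τ in Ioi a, ∫⁻ s, (Ioi τ).indicator (fun s => ENNReal.ofReal (p s)) s := by
        refine lintegral_congr fun τ => ?_
        rw [step1 τ, lintegral_indicator measurableSet_Ioi]
    _ = ∫⁻ s, ∫⁻ τ in Ioi a, (Ioi τ).indicator (fun s => ENNReal.ofReal (p s)) s := by
        refine lintegral_lintegral_swap ?_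
        have : (Function.uncurry fun τ s => (Ioi τ).indicator (fun s => ENNReal.ofReal (p s)) s)
            = {z : ℝ × ℝ | z.1 < z.2}.indicator (fun z => ENNReal.ofReal (p z.2)) := by
          funext z
          simp [Function.uncurry, Set.indicator_apply]
        rw [this]
        exact AEMeasurable.indicator
          (hpm.comp_quasiMeasurePreserving Measure.quasiMeasurePreserving_snd)
          (measurableSet_lt measurable_fst measurable_snd)
    _ = ∫⁻ s, ENNReal.ofReal (p s) * ENNReal.ofReal (s - a) := by
        refine lintegral_congr fun s => ?_
        have : ∀ τ, (Ioi τ).indicator (fun s => ENNReal.ofReal (p s)) s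
            = (Iio s).indicator (fun _ => ENNReal.ofReal (p s)) τ := fun τ => by
          by_cases h : τ < s <;> simp [Set.indicator_apply, h]
        rw [lintegral_congr this, lintegral_indicator measurableSet_Iio,
          Measure.restrict_restrict measurableSet_Iio, setLIntegral_const,
          Iio_inter_Ioi, Real.volume_Ioo]

end layercake


lemma intOn_of_bdd {f : ℝ → ℝ} {c : ℝ} (hmeas : Measurable f) (hb : ∀ x, |f x| ≤ c)
    {s : Set ℝ} (hs : volume s < ⊤) : IntegrableOn f s :=
  Integrable.mono' (integrableOn_const hs.ne) hmeas.aestronglyMeasurable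
    (ae_of_all _ hb)

section trans
variable (hmeas : Measurable P) (h0 : ∀ x, 0 ≤ P x) (h1 : ∀ x, P x ≤ 1)
include hmeas h0 h1

lemma L_transfer {a b : ℝ} (h : IntegrableOn P (Iic a)) : IntegrableOn P (Iic b) := by
  rcases le_total b a with hba | hab
  · exact h.mono_set (Iic_subset_Iic.2 hba)
  · have hoc : IntegrableOn P (Ioc a b) :=
      intOn_of_bdd hmeas (fun x => abs_le.2 ⟨by linarith [h0 x], h1 x⟩)
        (by rw [Real.volume_Ioc]; exact ENNReal.ofReal_lt_top)
    exact (h.union hoc).mono_set (by rw [Iic_union_Ioc_eq_Iic hab])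

lemma R_transfer {a b : ℝ} (h : IntegrableOn (fun τ => 1 - P τ) (Ioi a)) :
    IntegrableOn (fun τ => 1 - P τ) (Ioi b) := by
  rcases le_total a b with hab | hba
  · exact h.mono_set (Ioi_subset_Ioi hab)
  · have hoc : IntegrableOn (fun τ => 1 - P τ) (Ioc b a) :=
      intOn_of_bdd (c := 1) ((measurable_const.sub hmeas))
        (fun x => abs_le.2 ⟨by simp only [Pi.sub_apply]; linarith [h1 x], by simp only [Pi.sub_apply]; linarith [h0 x]⟩)
        (by rw [Real.volume_Ioc]; exact ENNReal.ofReal_lt_top)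
    exact (hoc.union h).mono_set (by rw [Ioc_union_Ioi_eq_Ioi hba])

variable (hint3 : Integrable (fun x => P x * (1 - P x)))
include hint3

lemma P_intOn_of_sq {s : Set ℝ} (h2 : IntegrableOn (fun τ => (P τ)^2) s) :
    IntegrableOn P s := by
  have : P = fun τ => (P τ)^2 + P τ * (1 - P τ) := funext fun τ => by ring
  rw [this]
  exact h2.add hint3.integrableOn

lemma one_sub_P_intOn_of_sq {s : Set ℝ} (h2 : IntegrableOn (fun τ => (1 - P τ)^2) s) :
    IntegrableOn (fun τ => 1 - P τ) s := by
  have : (fun τ => 1 - P τ) = fun τ => (1 - P τ)^2 + P τ * (1 - P τ) := funext fun τ => by ring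
  rw [this]
  exact h2.add hint3.integrableOn

end trans

section sqint
variable {F : ℝ → ℝ} (hmeas : Measurable P) (h0 : ∀ x, 0 ≤ P x) (h1 : ∀ x, P x ≤ 1)
  (hint3 : Integrable (fun x => P x * (1 - P x))) (hint4 : Integrable (fun x => (Γ x)^2))
  (hFmeas : Measurable F)
include hmeas h0 h1 hint3 hint4 hFmeas

lemma sqIic_int (hL : IntegrableOn P (Iic 0))
    (hFb : ∀ τ, (F τ)^2 ≤ 2 * P τ + 2 * (Γ τ)^2) (x : ℝ) :
    IntegrableOn (fun τ => (F τ)^2) (Iic x) := by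
  have hPx : IntegrableOn P (Iic x) := L_transfer hmeas h0 h1 hL
  refine Integrable.mono' ((hPx.const_mul 2).add ((hint4.integrableOn).const_mul 2))
    ((hFmeas.pow_const 2).aestronglyMeasurable) (ae_of_all _ fun τ => ?_)
  simp only [Pi.add_apply, Real.norm_eq_abs]
  rw [abs_of_nonneg (sq_nonneg _)]
  exact hFb τ

lemma sqIic_nonint (hnL : ¬ IntegrableOn P (Iic 0))
    (hlb : ∀ τ, (P τ)^2 ≤ 2 * (F τ)^2 + 2 * (Γ τ)^2) (x : ℝ) :
    ¬ IntegrableOn (fun τ => (F τ)^2) (Iic x) := by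
  intro h
  have hP2 : IntegrableOn (fun τ => (P τ)^2) (Iic x) := by
    refine Integrable.mono' ((h.const_mul 2).add ((hint4.integrableOn).const_mul 2))
      ((hmeas.pow_const 2).aestronglyMeasurable) (ae_of_all _ fun τ => ?_)
    simp only [Pi.add_apply, Real.norm_eq_abs]
    rw [abs_of_nonneg (sq_nonneg _)]
    exact hlb τ
  exact hnL (L_transfer hmeas h0 h1 (P_intOn_of_sq hmeas h0 h1 hint3 hP2))

lemma sqIoi_int (hR : IntegrableOn (fun τ => 1 - P τ) (Ioi 0))
    (hFb : ∀ τ, (F τ - 1)^2 ≤ 2 * (1 - P τ) + 2 * (Γ τ)^2) (x : ℝ) :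
    IntegrableOn (fun τ => (F τ - 1)^2) (Ioi x) := by
  have hPx : IntegrableOn (fun τ => 1 - P τ) (Ioi x) := R_transfer hmeas h0 h1 hR
  refine Integrable.mono' ((hPx.const_mul 2).add ((hint4.integrableOn).const_mul 2))
    (((hFmeas.sub measurable_const).pow_const 2).aestronglyMeasurable)
    (ae_of_all _ fun τ => ?_)
  simp only [Pi.add_apply, Real.norm_eq_abs]
  rw [abs_of_nonneg (sq_nonneg _)]
  exact hFb τ

lemma sqIoi_nonint (hnR : ¬ IntegrableOn (fun τ => 1 - P τ) (Ioi 0))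
    (hlb : ∀ τ, (1 - P τ)^2 ≤ 2 * (F τ - 1)^2 + 2 * (Γ τ)^2) (x : ℝ) :
    ¬ IntegrableOn (fun τ => (F τ - 1)^2) (Ioi x) := by
  intro h
  have hP2 : IntegrableOn (fun τ => (1 - P τ)^2) (Ioi x) := by
    refine Integrable.mono' ((h.const_mul 2).add ((hint4.integrableOn).const_mul 2))
      (((measurable_const.sub hmeas).pow_const 2).aestronglyMeasurable)
      (ae_of_all _ fun τ => ?_)
    simp only [Pi.add_apply, Real.norm_eq_abs]
    rw [abs_of_nonneg (sq_nonneg _)]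
    exact hlb τ
  exact hnR (R_transfer hmeas h0 h1 (one_sub_P_intOn_of_sq hmeas h0 h1 hint3 hP2))

end sqint


section swap
variable {q : ℝ → ℝ}
variable (hp0 : ∀ x, 0 ≤ p x) (hp1 : ∫ x, p x = 1) (hpInt : Integrable p)
  (hP : ∀ x, P x = ∫ τ in Iic x, p τ)
  (h0 : ∀ x, 0 ≤ P x) (h1 : ∀ x, P x ≤ 1)
  (hqmeas : Measurable q)
include hp0 hp1 hpInt hP in
lemma int_Ici_p (τ : ℝ) : ∫ s in Ici τ, p s = 1 - P τ := by
  rw [integral_Ici_eq_integral_Ioi, ← one_sub_P hp0 hpInt hP hp1]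

include hpInt hP in
lemma int_Iio_p (τ : ℝ) : ∫ s in Iio τ, p s = P τ := by
  rw [← integral_Iic_eq_integral_Iio, ← hP]

include hp0 hp1 hpInt hP h0 h1 hqmeas

lemma g_int_Iic (hbig : Integrable (fun τ => |q τ| * (1 - P τ))) :
    Integrable (fun z : ℝ × ℝ => p z.1 * (Iic z.1).indicator q z.2)
      ((volume : Measure ℝ).prod (volume : Measure ℝ)) := by
  set g : ℝ × ℝ → ℝ := fun z => p z.1 * (Iic z.1).indicator q z.2 with hg
  have hge : g = fun z => p z.1 * ({z : ℝ × ℝ | z.2 ≤ z.1}.indicator (fun z => q z.2) z) := by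
    funext z
    simp [hg, Set.indicator_apply]
  have hsm : AEStronglyMeasurable g ((volume : Measure ℝ).prod volume) := by
    rw [hge]
    exact (hpInt.1.comp_fst).mul
      (((hqmeas.comp measurable_snd).indicator
        (measurableSet_le measurable_snd measurable_fst)).aestronglyMeasurable)
  refine ⟨hsm, ?_⟩
  rw [hasFiniteIntegral_def, lintegral_prod _ hsm.enorm]
  have hunc : Function.uncurry (fun x τ => ‖g (x, τ)‖ₑ) = fun z => ‖g z‖ₑ := by
    funext z; cases z; rfl
  have hswap : ∫⁻ x, ∫⁻ τ, ‖g (x, τ)‖ₑ = ∫⁻ τ, ∫⁻ x, ‖g (x, τ)‖ₑ := by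
    refine lintegral_lintegral_swap ?_
    rw [hunc]
    exact hsm.enorm
  rw [hswap]
  have key : ∀ τ x, ‖g (x, τ)‖ₑ
      = ENNReal.ofReal |q τ| * (Ici τ).indicator (fun x => ENNReal.ofReal (p x)) x := by
    intro τ x
    by_cases h : τ ≤ x
    · have hx : x ∈ Iic x := mem_Iic.2 le_rfl
      rw [hg]
      simp only [Set.indicator_of_mem (mem_Iic.2 h), Set.indicator_of_mem (mem_Ici.2 h)]
      rw [Real.enorm_eq_ofReal_abs, abs_mul, abs_of_nonneg (hp0 x),
        ENNReal.ofReal_mul (hp0 x), mul_comm]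
    · rw [hg]
      simp only [Set.indicator_of_notMem (fun hc => h (mem_Iic.1 hc)),
        Set.indicator_of_notMem (fun hc => h (mem_Ici.1 hc)), mul_zero]
      simp
  have hinner : ∀ τ, ∫⁻ x, ‖g (x, τ)‖ₑ
      = ENNReal.ofReal (|q τ| * (1 - P τ)) := by
    intro τ
    rw [lintegral_congr (key τ),
      lintegral_const_mul' _ _ ENNReal.ofReal_ne_top,
      lintegral_indicator measurableSet_Ici,
      ← ofReal_integral_eq_lintegral_ofReal hpInt.integrableOn (ae_of_all _ hp0),
      int_Ici_p hp0 hp1 hpInt hP, ← ENNReal.ofReal_mul (abs_nonneg _)]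
  rw [lintegral_congr hinner,
    ← ofReal_integral_eq_lintegral_ofReal hbig
      (ae_of_all _ fun τ => mul_nonneg (abs_nonneg _) (by linarith [h1 τ]))]
  exact ENNReal.ofReal_lt_top

lemma g_int_Ioi (hbig : Integrable (fun τ => |q τ| * P τ)) :
    Integrable (fun z : ℝ × ℝ => p z.1 * (Ioi z.1).indicator q z.2)
      ((volume : Measure ℝ).prod (volume : Measure ℝ)) := by
  set g : ℝ × ℝ → ℝ := fun z => p z.1 * (Ioi z.1).indicator q z.2 with hg
  have hge : g = fun z => p z.1 * ({z : ℝ × ℝ | z.1 < z.2}.indicator (fun z => q z.2) z) := by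
    funext z
    simp [hg, Set.indicator_apply]
  have hsm : AEStronglyMeasurable g ((volume : Measure ℝ).prod volume) := by
    rw [hge]
    exact (hpInt.1.comp_fst).mul
      (((hqmeas.comp measurable_snd).indicator
        (measurableSet_lt measurable_fst measurable_snd)).aestronglyMeasurable)
  refine ⟨hsm, ?_⟩
  rw [hasFiniteIntegral_def, lintegral_prod _ hsm.enorm]
  have hunc : Function.uncurry (fun x τ => ‖g (x, τ)‖ₑ) = fun z => ‖g z‖ₑ := by
    funext z; cases z; rfl
  have hswap : ∫⁻ x, ∫⁻ τ, ‖g (x, τ)‖ₑ = ∫⁻ τ, ∫⁻ x, ‖g (x, τ)‖ₑ := by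
    refine lintegral_lintegral_swap ?_
    rw [hunc]
    exact hsm.enorm
  rw [hswap]
  have key : ∀ τ x, ‖g (x, τ)‖ₑ
      = ENNReal.ofReal |q τ| * (Iio τ).indicator (fun x => ENNReal.ofReal (p x)) x := by
    intro τ x
    by_cases h : x < τ
    · rw [hg]
      simp only [Set.indicator_of_mem (mem_Ioi.2 h), Set.indicator_of_mem (mem_Iio.2 h)]
      rw [Real.enorm_eq_ofReal_abs, abs_mul, abs_of_nonneg (hp0 x),
        ENNReal.ofReal_mul (hp0 x), mul_comm]
    · rw [hg]
      simp only [Set.indicator_of_notMem (fun hc => h (mem_Ioi.1 hc)),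
        Set.indicator_of_notMem (fun hc => h (mem_Iio.1 hc)), mul_zero]
      simp
  have hinner : ∀ τ, ∫⁻ x, ‖g (x, τ)‖ₑ
      = ENNReal.ofReal (|q τ| * P τ) := by
    intro τ
    rw [lintegral_congr (key τ),
      lintegral_const_mul' _ _ ENNReal.ofReal_ne_top,
      lintegral_indicator measurableSet_Iio,
      ← ofReal_integral_eq_lintegral_ofReal hpInt.integrableOn (ae_of_all _ hp0),
      int_Iio_p hpInt hP, ← ENNReal.ofReal_mul (abs_nonneg _)]
  rw [lintegral_congr hinner,
    ← ofReal_integral_eq_lintegral_ofReal hbig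
      (ae_of_all _ fun τ => mul_nonneg (abs_nonneg _) (h0 τ))]
  exact ENNReal.ofReal_lt_top


lemma swap_Iic_main (hbig : Integrable (fun τ => |q τ| * (1 - P τ))) :
    Integrable (fun x => p x * ∫ τ in Iic x, q τ) ∧
      ∫ x, p x * ∫ τ in Iic x, q τ = ∫ τ, q τ * (1 - P τ) := by
  have hgi := g_int_Iic hp0 hp1 hpInt hP h0 h1 hqmeas hbig
  have hslice1 : ∀ x, ∫ τ, p x * (Iic x).indicator q τ = p x * ∫ τ in Iic x, q τ := by
    intro x
    rw [integral_const_mul, integral_indicator measurableSet_Iic]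
  have hslice2 : ∀ τ, ∫ x, p x * (Iic x).indicator q τ = q τ * (1 - P τ) := by
    intro τ
    have he : (fun x => p x * (Iic x).indicator q τ) = (Ici τ).indicator (fun x => p x * q τ) := by
      funext x
      by_cases h : τ ≤ x
      · rw [Set.indicator_of_mem (mem_Iic.2 h), Set.indicator_of_mem (mem_Ici.2 h)]
      · rw [Set.indicator_of_notMem (fun hc => h (mem_Iic.1 hc)),
          Set.indicator_of_notMem (fun hc => h (mem_Ici.1 hc)), mul_zero]
    rw [he, integral_indicator measurableSet_Ici, integral_mul_const,
      int_Ici_p hp0 hp1 hpInt hP τ, mul_comm]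
  have h3 := integral_integral_swap (f := fun x τ => p x * (Iic x).indicator q τ)
    (μ := (volume : Measure ℝ)) (ν := (volume : Measure ℝ)) hgi
  constructor
  · have h2 : Integrable (fun x => ∫ τ, p x * (Iic x).indicator q τ) := hgi.integral_prod_left
    have he : (fun x => ∫ τ, p x * (Iic x).indicator q τ) = fun x => p x * ∫ τ in Iic x, q τ :=
      funext hslice1
    rwa [he] at h2
  · have e1 : ∫ x, p x * ∫ τ in Iic x, q τ = ∫ x, ∫ τ, p x * (Iic x).indicator q τ :=
      integral_congr_ae (ae_of_all _ fun x => (hslice1 x).symm)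
    have e2 : ∫ τ, ∫ x, p x * (Iic x).indicator q τ = ∫ τ, q τ * (1 - P τ) :=
      integral_congr_ae (ae_of_all _ fun τ => hslice2 τ)
    rw [e1, h3, e2]

lemma swap_Ioi_main (hbig : Integrable (fun τ => |q τ| * P τ)) :
    Integrable (fun x => p x * ∫ τ in Ioi x, q τ) ∧
      ∫ x, p x * ∫ τ in Ioi x, q τ = ∫ τ, q τ * P τ := by
  have hgi := g_int_Ioi hp0 hp1 hpInt hP h0 h1 hqmeas hbig
  have hslice1 : ∀ x, ∫ τ, p x * (Ioi x).indicator q τ = p x * ∫ τ in Ioi x, q τ := by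
    intro x
    rw [integral_const_mul, integral_indicator measurableSet_Ioi]
  have hslice2 : ∀ τ, ∫ x, p x * (Ioi x).indicator q τ = q τ * P τ := by
    intro τ
    have he : (fun x => p x * (Ioi x).indicator q τ) = (Iio τ).indicator (fun x => p x * q τ) := by
      funext x
      by_cases h : x < τ
      · rw [Set.indicator_of_mem (mem_Ioi.2 h), Set.indicator_of_mem (mem_Iio.2 h)]
      · rw [Set.indicator_of_notMem (fun hc => h (mem_Ioi.1 hc)),
          Set.indicator_of_notMem (fun hc => h (mem_Iio.1 hc)), mul_zero]
    rw [he, integral_indicator measurableSet_Iio, integral_mul_const,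
      int_Iio_p hpInt hP τ, mul_comm]
  have h3 := integral_integral_swap (f := fun x τ => p x * (Ioi x).indicator q τ)
    (μ := (volume : Measure ℝ)) (ν := (volume : Measure ℝ)) hgi
  constructor
  · have h2 : Integrable (fun x => ∫ τ, p x * (Ioi x).indicator q τ) := hgi.integral_prod_left
    have he : (fun x => ∫ τ, p x * (Ioi x).indicator q τ) = fun x => p x * ∫ τ in Ioi x, q τ :=
      funext hslice1
    rwa [he] at h2
  · have e1 : ∫ x, p x * ∫ τ in Ioi x, q τ = ∫ x, ∫ τ, p x * (Ioi x).indicator q τ :=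
      integral_congr_ae (ae_of_all _ fun x => (hslice1 x).symm)
    have e2 : ∫ τ, ∫ x, p x * (Ioi x).indicator q τ = ∫ τ, q τ * P τ :=
      integral_congr_ae (ae_of_all _ fun τ => hslice2 τ)
    rw [e1, h3, e2]

end swap


section pts
variable (hp0 : ∀ x, 0 ≤ p x) (hp1 : ∫ x, p x = 1) (hpInt : Integrable p)
  (hP : ∀ x, P x = ∫ τ in Iic x, p τ)
include hp0 hp1 hpInt hP

lemma exists_P_lt_one : ∃ a, P a < 1 := by
  by_contra hc
  push_neg at hc
  have hall : ∀ a : ℝ, ∫ s in Ioi a, p s = 0 := fun a => by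
    have h1 := P_le_one hp0 hpInt hP hp1 a
    have h2 := one_sub_P hp0 hpInt hP hp1 a
    have : P a = 1 := le_antisymm h1 (hc a)
    rw [← h2, this]; ring
  have hmono : Monotone (fun n : ℕ => Ioi (-(n:ℝ))) := fun m n hmn => by
    exact Ioi_subset_Ioi (by exact_mod_cast neg_le_neg (by exact_mod_cast hmn))
  have hunion : (⋃ n : ℕ, Ioi (-(n:ℝ))) = univ := by
    ext x
    simp only [mem_iUnion, mem_Ioi, mem_univ, iff_true]
    obtain ⟨n, hn⟩ := exists_nat_gt (-x)
    exact ⟨n, by linarith⟩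
  have htend := tendsto_setIntegral_of_monotone (fun n => measurableSet_Ioi) hmono
    (by rw [hunion]; exact hpInt.integrableOn)
  rw [hunion] at htend
  have : (∫ x in (univ : Set ℝ), p x) = 0 :=
    tendsto_nhds_unique htend (by simp only [hall]; exact tendsto_const_nhds)
  rw [setIntegral_univ, hp1] at this
  norm_num at this

lemma exists_P_pos : ∃ a, 0 < P a := by
  by_contra hc
  push_neg at hc
  have hall : ∀ a : ℝ, ∫ s in Iic a, p s = 0 := fun a => by
    have h1 := P_nonneg hp0 hpInt hP a
    have : P a = 0 := le_antisymm (hc a) h1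
    rw [← hP a, this]
  have hmono : Monotone (fun n : ℕ => Iic ((n:ℝ))) := fun m n hmn => by
    exact Iic_subset_Iic.2 (by exact_mod_cast hmn)
  have hunion : (⋃ n : ℕ, Iic ((n:ℝ))) = univ := by
    ext x
    simp only [mem_iUnion, mem_Iic, mem_univ, iff_true]
    obtain ⟨n, hn⟩ := exists_nat_gt x
    exact ⟨n, hn.le⟩
  have htend := tendsto_setIntegral_of_monotone (fun n => measurableSet_Iic) hmono
    (by rw [hunion]; exact hpInt.integrableOn)
  rw [hunion] at htend
  have : (∫ x in (univ : Set ℝ), p x) = 0 :=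
    tendsto_nhds_unique htend (by simp only [hall]; exact tendsto_const_nhds)
  rw [setIntegral_univ, hp1] at this
  norm_num at this

lemma left_of_moment {a : ℝ}
    (hmom : IntegrableOn (fun x => p x * (a - x)) (Iic a)) : IntegrableOn P (Iic a) := by
  have hm : Integrable ((Iic a).indicator (fun s => p s * (a - s))) :=
    hmom.integrable_indicator measurableSet_Iic
  have hfin : ∫⁻ s, ENNReal.ofReal (p s) * ENNReal.ofReal (a - s) < ⊤ := by
    have he : ∀ s, ENNReal.ofReal (p s) * ENNReal.ofReal (a - s)
        = ‖(Iic a).indicator (fun s => p s * (a - s)) s‖ₑ := by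
      intro s
      by_cases h : s ≤ a
      · rw [Set.indicator_of_mem (mem_Iic.2 h), Real.enorm_eq_ofReal_abs,
          abs_of_nonneg (mul_nonneg (hp0 s) (by linarith)), ENNReal.ofReal_mul (hp0 s)]
      · rw [Set.indicator_of_notMem (fun hc => h (mem_Iic.1 hc)),
          ENNReal.ofReal_of_nonpos (show a - s ≤ 0 by linarith), mul_zero]
        simp
    rw [lintegral_congr he]
    exact hm.2
  refine ⟨((measP hp0 hpInt hP).aestronglyMeasurable).restrict, ?_⟩
  rw [hasFiniteIntegral_def]
  have he2 : ∀ τ, ‖P τ‖ₑ = ENNReal.ofReal (P τ) := fun τ => by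
    rw [Real.enorm_eq_ofReal_abs, abs_of_nonneg (P_nonneg hp0 hpInt hP τ)]
  calc ∫⁻ τ, ‖P τ‖ₑ ∂(volume.restrict (Iic a))
      = ∫⁻ τ in Iic a, ENNReal.ofReal (P τ) := lintegral_congr he2
    _ = ∫⁻ s, ENNReal.ofReal (p s) * ENNReal.ofReal (a - s) := LCleft hp0 hpInt hP a
    _ < ⊤ := hfin

lemma right_of_moment {a : ℝ}
    (hmom : IntegrableOn (fun x => p x * (x - a)) (Ici a)) :
    IntegrableOn (fun τ => 1 - P τ) (Ioi a) := by
  have hm : Integrable ((Ici a).indicator (fun s => p s * (s - a))) :=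
    hmom.integrable_indicator measurableSet_Ici
  have hfin : ∫⁻ s, ENNReal.ofReal (p s) * ENNReal.ofReal (s - a) < ⊤ := by
    have he : ∀ s, ENNReal.ofReal (p s) * ENNReal.ofReal (s - a)
        = ‖(Ici a).indicator (fun s => p s * (s - a)) s‖ₑ := by
      intro s
      by_cases h : a ≤ s
      · rw [Set.indicator_of_mem (mem_Ici.2 h), Real.enorm_eq_ofReal_abs,
          abs_of_nonneg (mul_nonneg (hp0 s) (by linarith)), ENNReal.ofReal_mul (hp0 s)]
      · rw [Set.indicator_of_notMem (fun hc => h (mem_Ici.1 hc)),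
          ENNReal.ofReal_of_nonpos (show s - a ≤ 0 by linarith), mul_zero]
        simp
    rw [lintegral_congr he]
    exact hm.2
  refine ⟨((measurable_const.sub (measP hp0 hpInt hP)).aestronglyMeasurable).restrict, ?_⟩
  rw [hasFiniteIntegral_def]
  have he2 : ∀ τ, ‖1 - P τ‖ₑ = ENNReal.ofReal (1 - P τ) := fun τ => by
    rw [Real.enorm_eq_ofReal_abs,
      abs_of_nonneg (by linarith [P_le_one hp0 hpInt hP hp1 τ])]
  calc ∫⁻ τ, ‖1 - P τ‖ₑ ∂(volume.restrict (Ioi a))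
      = ∫⁻ τ in Ioi a, ENNReal.ofReal (1 - P τ) := lintegral_congr he2
    _ = ∫⁻ s, ENNReal.ofReal (p s) * ENNReal.ofReal (s - a) := LCright hp0 hpInt hP hp1 a
    _ < ⊤ := hfin

end pts


section contra
variable {F : ℝ → ℝ}
variable (hp0 : ∀ x, 0 ≤ p x) (hp1 : ∫ x, p x = 1) (hpInt : Integrable p)
  (hP : ∀ x, P x = ∫ τ in Iic x, p τ)
  (hint3 : Integrable (fun x => P x * (1 - P x))) (hint4 : Integrable (fun x => (Γ x)^2))
  (hFmeas : Measurable F)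
  (hlbA : ∀ τ, (P τ)^2 ≤ 2 * (F τ)^2 + 2 * (Γ τ)^2)
  (hlbB : ∀ τ, (1 - P τ)^2 ≤ 2 * (F τ - 1)^2 + 2 * (Γ τ)^2)
  (hubA : ∀ τ, (F τ)^2 ≤ 2 * P τ + 2 * (Γ τ)^2)
  (hubB : ∀ τ, (F τ - 1)^2 ≤ 2 * (1 - P τ) + 2 * (Γ τ)^2)
  (hint : Integrable (fun x => p x * ((∫ τ in Iic x, (F τ)^2)
      + ∫ τ in Ioi x, (F τ - 1)^2)))
include hp0 hp1 hpInt hP hint3 hint4 hFmeas hlbA hlbB hubA hubB hint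

lemma contra_nLR (hnL : ¬ IntegrableOn P (Iic 0))
    (hR : IntegrableOn (fun τ => 1 - P τ) (Ioi 0)) : False := by
  have hmeasP := measP hp0 hpInt hP
  have h0 := P_nonneg hp0 hpInt hP
  have h1 := P_le_one hp0 hpInt hP hp1
  have hmono := monoP hp0 hpInt hP
  have hA0 : ∀ x, (∫ τ in Iic x, (F τ)^2) = 0 := fun x =>
    integral_undef (sqIic_nonint hmeasP h0 h1 hint3 hint4 hFmeas hnL hlbA x)
  have hint' : Integrable (fun x => p x * ∫ τ in Ioi x, (F τ - 1)^2) := by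
    have he : (fun x => p x * ((∫ τ in Iic x, (F τ)^2) + ∫ τ in Ioi x, (F τ - 1)^2))
        = fun x => p x * ∫ τ in Ioi x, (F τ - 1)^2 := funext fun x => by rw [hA0 x, zero_add]
    rwa [he] at hint
  obtain ⟨a, ha⟩ := exists_P_lt_one hp0 hp1 hpInt hP
  set c : ℝ := (1 - P a)^2 with hc
  have hcpos : 0 < c := pow_pos (by linarith) 2
  set K : ℝ := ∫ τ, (Γ τ)^2 with hK
  have hKn : ∀ x : ℝ, ∫ τ in Ioi x, (Γ τ)^2 ≤ K := fun x =>
    setIntegral_le_integral hint4 (ae_of_all _ fun τ => sq_nonneg _)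
  have hsq : ∀ x : ℝ, IntegrableOn (fun τ => (1 - P τ)^2) (Ioi x) := fun x => by
    refine Integrable.mono' (R_transfer hmeasP h0 h1 hR)
      (((measurable_const.sub hmeasP).pow_const 2).aestronglyMeasurable.restrict)
      (ae_of_all _ fun τ => ?_)
    rw [Real.norm_eq_abs, abs_of_nonneg (sq_nonneg _)]
    nlinarith [h0 τ, h1 τ]
  have hFsq : ∀ x : ℝ, IntegrableOn (fun τ => (F τ - 1)^2) (Ioi x) :=
    sqIoi_int hmeasP h0 h1 hint3 hint4 hFmeas hR hubB
  have hBlb : ∀ x, x ≤ a → c/2 * (a - x) - K ≤ ∫ τ in Ioi x, (F τ - 1)^2 := by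
    intro x hx
    have s1 : ∫ τ in Ioi x, ((1 - P τ)^2/2 - (Γ τ)^2) ≤ ∫ τ in Ioi x, (F τ - 1)^2 :=
      setIntegral_mono (((hsq x).div_const 2).sub hint4.integrableOn) (hFsq x)
        (fun τ => by nlinarith [hlbB τ])
    have s2 : ∫ τ in Ioi x, ((1 - P τ)^2/2 - (Γ τ)^2)
        = (∫ τ in Ioi x, (1 - P τ)^2)/2 - ∫ τ in Ioi x, (Γ τ)^2 := by
      rw [integral_sub ((hsq x).div_const 2) hint4.integrableOn, integral_div]
    have s3 : c * (a - x) ≤ ∫ τ in Ioi x, (1 - P τ)^2 := by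
      have t1 : ∫ _ in Ioc x a, c ≤ ∫ τ in Ioc x a, (1 - P τ)^2 := by
        refine setIntegral_mono_on
          (integrableOn_const (by rw [Real.volume_Ioc]; exact ENNReal.ofReal_ne_top))
          ((hsq x).mono_set Ioc_subset_Ioi_self) measurableSet_Ioc fun τ hτ => ?_
        rw [hc]
        exact pow_le_pow_left₀ (by linarith [h1 τ]) (by linarith [hmono hτ.2]) 2
      have t2 : ∫ _ in Ioc x a, c = c * (a - x) := by
        rw [setIntegral_const, measureReal_def, Real.volume_Ioc, ENNReal.toReal_ofReal (by linarith),
          smul_eq_mul, mul_comm]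
      have t3 : ∫ τ in Ioc x a, (1 - P τ)^2 ≤ ∫ τ in Ioi x, (1 - P τ)^2 :=
        setIntegral_mono_set (hsq x) (ae_of_all _ fun τ => sq_nonneg _)
          (HasSubset.Subset.eventuallyLE Ioc_subset_Ioi_self)
      linarith
    have s4 := hKn x
    linarith
  have hmom : IntegrableOn (fun x => p x * (a - x)) (Iic a) := by
    refine Integrable.mono'
      (g := fun x => (2/c) * (p x * (∫ τ in Ioi x, (F τ - 1)^2) + K * p x)) ?_ ?_ ?_
    · exact ((hint'.integrableOn.add ((hpInt.integrableOn).const_mul K)).const_mul (2/c))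
    · exact (hpInt.1.mul
        ((continuous_const.sub continuous_id).aestronglyMeasurable)).restrict
    · rw [ae_restrict_iff' measurableSet_Iic]
      refine ae_of_all _ fun x hx => ?_
      have hxa := mem_Iic.1 hx
      have hB := hBlb x hxa
      have hpx := hp0 x
      rw [Real.norm_eq_abs, abs_of_nonneg (mul_nonneg hpx (by linarith))]
      have h5 : p x * (c/2*(a-x) - K) ≤ p x * ∫ τ in Ioi x, (F τ - 1)^2 :=
        mul_le_mul_of_nonneg_left hB hpx
      have h6 : c/2 * (p x * (a - x)) ≤ p x * (∫ τ in Ioi x, (F τ - 1)^2) + K * p x := by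
        nlinarith
      calc p x * (a - x) = (2/c) * (c/2 * (p x * (a - x))) := by field_simp
        _ ≤ (2/c) * (p x * (∫ τ in Ioi x, (F τ - 1)^2) + K * p x) :=
            mul_le_mul_of_nonneg_left h6 (by positivity)
  exact hnL (L_transfer hmeasP h0 h1 (left_of_moment hp0 hp1 hpInt hP hmom))

lemma contra_LnR (hL : IntegrableOn P (Iic 0))
    (hnR : ¬ IntegrableOn (fun τ => 1 - P τ) (Ioi 0)) : False := by
  have hmeasP := measP hp0 hpInt hP
  have h0 := P_nonneg hp0 hpInt hP
  have h1 := P_le_one hp0 hpInt hP hp1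
  have hmono := monoP hp0 hpInt hP
  have hB0 : ∀ x, (∫ τ in Ioi x, (F τ - 1)^2) = 0 := fun x =>
    integral_undef (sqIoi_nonint hmeasP h0 h1 hint3 hint4 hFmeas hnR hlbB x)
  have hint' : Integrable (fun x => p x * ∫ τ in Iic x, (F τ)^2) := by
    have he : (fun x => p x * ((∫ τ in Iic x, (F τ)^2) + ∫ τ in Ioi x, (F τ - 1)^2))
        = fun x => p x * ∫ τ in Iic x, (F τ)^2 := funext fun x => by rw [hB0 x, add_zero]
    rwa [he] at hint
  obtain ⟨a, ha⟩ := exists_P_pos hp0 hp1 hpInt hP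
  set c : ℝ := (P a)^2 with hc
  have hcpos : 0 < c := pow_pos ha 2
  set K : ℝ := ∫ τ, (Γ τ)^2 with hK
  have hKn : ∀ x : ℝ, ∫ τ in Iic x, (Γ τ)^2 ≤ K := fun x =>
    setIntegral_le_integral hint4 (ae_of_all _ fun τ => sq_nonneg _)
  have hsq : ∀ x : ℝ, IntegrableOn (fun τ => (P τ)^2) (Iic x) := fun x => by
    refine Integrable.mono' (L_transfer hmeasP h0 h1 hL)
      ((hmeasP.pow_const 2).aestronglyMeasurable.restrict)
      (ae_of_all _ fun τ => ?_)
    rw [Real.norm_eq_abs, abs_of_nonneg (sq_nonneg _)]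
    nlinarith [h0 τ, h1 τ]
  have hFsq : ∀ x : ℝ, IntegrableOn (fun τ => (F τ)^2) (Iic x) :=
    sqIic_int hmeasP h0 h1 hint3 hint4 hFmeas hL hubA
  have hAlb : ∀ x, a ≤ x → c/2 * (x - a) - K ≤ ∫ τ in Iic x, (F τ)^2 := by
    intro x hx
    have s1 : ∫ τ in Iic x, ((P τ)^2/2 - (Γ τ)^2) ≤ ∫ τ in Iic x, (F τ)^2 :=
      setIntegral_mono (((hsq x).div_const 2).sub hint4.integrableOn) (hFsq x)
        (fun τ => by nlinarith [hlbA τ])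
    have s2 : ∫ τ in Iic x, ((P τ)^2/2 - (Γ τ)^2)
        = (∫ τ in Iic x, (P τ)^2)/2 - ∫ τ in Iic x, (Γ τ)^2 := by
      rw [integral_sub ((hsq x).div_const 2) hint4.integrableOn, integral_div]
    have s3 : c * (x - a) ≤ ∫ τ in Iic x, (P τ)^2 := by
      have t1 : ∫ _ in Ioc a x, c ≤ ∫ τ in Ioc a x, (P τ)^2 := by
        refine setIntegral_mono_on
          (integrableOn_const (by rw [Real.volume_Ioc]; exact ENNReal.ofReal_ne_top))
          ((hsq x).mono_set Ioc_subset_Iic_self) measurableSet_Ioc fun τ hτ => ?_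
        rw [hc]
        exact pow_le_pow_left₀ (le_of_lt ha) (hmono (le_of_lt hτ.1)) 2
      have t2 : ∫ _ in Ioc a x, c = c * (x - a) := by
        rw [setIntegral_const, measureReal_def, Real.volume_Ioc, ENNReal.toReal_ofReal (by linarith),
          smul_eq_mul, mul_comm]
      have t3 : ∫ τ in Ioc a x, (P τ)^2 ≤ ∫ τ in Iic x, (P τ)^2 :=
        setIntegral_mono_set (hsq x) (ae_of_all _ fun τ => sq_nonneg _)
          (HasSubset.Subset.eventuallyLE Ioc_subset_Iic_self)
      linarith
    have s4 := hKn x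
    linarith
  have hmom : IntegrableOn (fun x => p x * (x - a)) (Ici a) := by
    refine Integrable.mono'
      (g := fun x => (2/c) * (p x * (∫ τ in Iic x, (F τ)^2) + K * p x)) ?_ ?_ ?_
    · exact ((hint'.integrableOn.add ((hpInt.integrableOn).const_mul K)).const_mul (2/c))
    · exact (hpInt.1.mul
        ((continuous_id.sub continuous_const).aestronglyMeasurable)).restrict
    · rw [ae_restrict_iff' measurableSet_Ici]
      refine ae_of_all _ fun x hx => ?_
      have hxa := mem_Ici.1 hx
      have hA := hAlb x hxa
      have hpx := hp0 x
      rw [Real.norm_eq_abs, abs_of_nonneg (mul_nonneg hpx (by linarith))]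
      have h5 : p x * (c/2*(x-a) - K) ≤ p x * ∫ τ in Iic x, (F τ)^2 :=
        mul_le_mul_of_nonneg_left hA hpx
      have h6 : c/2 * (p x * (x - a)) ≤ p x * (∫ τ in Iic x, (F τ)^2) + K * p x := by
        nlinarith
      calc p x * (x - a) = (2/c) * (c/2 * (p x * (x - a))) := by field_simp
        _ ≤ (2/c) * (p x * (∫ τ in Iic x, (F τ)^2) + K * p x) :=
            mul_le_mul_of_nonneg_left h6 (by positivity)
  exact hnR (R_transfer hmeasP h0 h1 (right_of_moment hp0 hp1 hpInt hP hmom))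

end contra

end CRPSaux

open CRPSaux

/-- The CRPS does not distinguish density forecasts whose errors from the
target density differ only by sign. -/
theorem CRPS_sign_indifferent (p γ P Γ F₁ F₂ : ℝ → ℝ)
    (hp0 : ∀ x, 0 ≤ p x) (hp1 : ∫ x, p x = 1) (hpInt : Integrable p)
    (hγInt : Integrable γ) (hγ0 : ∫ x, γ x = 0)
    (hP : ∀ x, P x = ∫ τ in Set.Iic x, p τ)
    (hΓ : ∀ x, Γ x = ∫ τ in Set.Iic x, γ τ)
    (hF₁ : ∀ x, F₁ x = P x + Γ x) (hF₂ : ∀ x, F₂ x = P x - Γ x)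
    (hint1 : Integrable (fun x => p x * ((∫ τ in Set.Iic x, (F₁ τ)^2)
        + ∫ τ in Set.Ioi x, (F₁ τ - 1)^2)))
    (hint2 : Integrable (fun x => p x * ((∫ τ in Set.Iic x, (F₂ τ)^2)
        + ∫ τ in Set.Ioi x, (F₂ τ - 1)^2)))
    (hint3 : Integrable (fun x => P x * (1 - P x)))
    (hint4 : Integrable (fun x => (Γ x)^2)) :
    (∫ x, p x * ((∫ τ in Set.Iic x, (F₁ τ)^2) + ∫ τ in Set.Ioi x, (F₁ τ - 1)^2))
      = ∫ x, p x * ((∫ τ in Set.Iic x, (F₂ τ)^2) + ∫ τ in Set.Ioi x, (F₂ τ - 1)^2) := by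
  have hmeasP : Measurable P := measP hp0 hpInt hP
  have hmeasΓ : Measurable Γ := measΓ hγInt hΓ
  have h0 := P_nonneg hp0 hpInt hP
  have h1 := P_le_one hp0 hpInt hP hp1
  have hmeasF₁ : Measurable F₁ := by
    have he : F₁ = fun x => P x + Γ x := funext hF₁
    rw [he]; exact hmeasP.add hmeasΓ
  have hmeasF₂ : Measurable F₂ := by
    have he : F₂ = fun x => P x - Γ x := funext hF₂
    rw [he]; exact hmeasP.sub hmeasΓ
  have hlbA₁ : ∀ τ, (P τ)^2 ≤ 2 * (F₁ τ)^2 + 2 * (Γ τ)^2 := fun τ => by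
    rw [hF₁ τ]; nlinarith [sq_nonneg (P τ + 2 * Γ τ)]
  have hlbA₂ : ∀ τ, (P τ)^2 ≤ 2 * (F₂ τ)^2 + 2 * (Γ τ)^2 := fun τ => by
    rw [hF₂ τ]; nlinarith [sq_nonneg (P τ - 2 * Γ τ)]
  have hlbB₁ : ∀ τ, (1 - P τ)^2 ≤ 2 * (F₁ τ - 1)^2 + 2 * (Γ τ)^2 := fun τ => by
    rw [hF₁ τ]; nlinarith [sq_nonneg (P τ - 1 + 2 * Γ τ)]
  have hlbB₂ : ∀ τ, (1 - P τ)^2 ≤ 2 * (F₂ τ - 1)^2 + 2 * (Γ τ)^2 := fun τ => by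
    rw [hF₂ τ]; nlinarith [sq_nonneg (P τ - 1 - 2 * Γ τ)]
  have hPP : ∀ τ, 0 ≤ P τ * (1 - P τ) := fun τ =>
    mul_nonneg (h0 τ) (by linarith [h1 τ])
  have hubA₁ : ∀ τ, (F₁ τ)^2 ≤ 2 * P τ + 2 * (Γ τ)^2 := fun τ => by
    rw [hF₁ τ]; nlinarith [sq_nonneg (P τ - Γ τ), hPP τ]
  have hubA₂ : ∀ τ, (F₂ τ)^2 ≤ 2 * P τ + 2 * (Γ τ)^2 := fun τ => by
    rw [hF₂ τ]; nlinarith [sq_nonneg (P τ + Γ τ), hPP τ]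
  have hubB₁ : ∀ τ, (F₁ τ - 1)^2 ≤ 2 * (1 - P τ) + 2 * (Γ τ)^2 := fun τ => by
    rw [hF₁ τ]; nlinarith [sq_nonneg (P τ - 1 - Γ τ), hPP τ]
  have hubB₂ : ∀ τ, (F₂ τ - 1)^2 ≤ 2 * (1 - P τ) + 2 * (Γ τ)^2 := fun τ => by
    rw [hF₂ τ]; nlinarith [sq_nonneg (P τ - 1 + Γ τ), hPP τ]
  by_cases hL : IntegrableOn P (Iic 0)
  · by_cases hR : IntegrableOn (fun τ => 1 - P τ) (Ioi 0)
    · -- main case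
      have hΓb := Γ_bound hγInt hΓ
      have hq1meas : Measurable fun τ => P τ * Γ τ := hmeasP.mul hmeasΓ
      have hq2meas : Measurable fun τ => (P τ - 1) * Γ τ :=
        (hmeasP.sub measurable_const).mul hmeasΓ
      have hbig1 : Integrable (fun τ => |P τ * Γ τ| * (1 - P τ)) := by
        refine Integrable.mono' (hint3.const_mul (∫ t, |γ t|))
          ((hq1meas.abs.mul (measurable_const.sub hmeasP)).aestronglyMeasurable)
          (ae_of_all _ fun τ => ?_)
        have h1P : (0:ℝ) ≤ 1 - P τ := by linarith [h1 τ]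
        rw [Real.norm_eq_abs, abs_of_nonneg (mul_nonneg (abs_nonneg _) h1P),
          abs_mul, abs_of_nonneg (h0 τ)]
        nlinarith [mul_nonneg (sub_nonneg.2 (hΓb τ)) (hPP τ)]
      have hbig2 : Integrable (fun τ => |(P τ - 1) * Γ τ| * P τ) := by
        refine Integrable.mono' (hint3.const_mul (∫ t, |γ t|))
          ((hq2meas.abs.mul hmeasP).aestronglyMeasurable)
          (ae_of_all _ fun τ => ?_)
        have h1P : (0:ℝ) ≤ 1 - P τ := by linarith [h1 τ]
        rw [Real.norm_eq_abs, abs_of_nonneg (mul_nonneg (abs_nonneg _) (h0 τ)),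
          abs_mul, abs_of_nonpos (by linarith [h1 τ] : P τ - 1 ≤ 0)]
        nlinarith [mul_nonneg (sub_nonneg.2 (hΓb τ)) (hPP τ)]
      obtain ⟨hI1, hE1⟩ := swap_Iic_main hp0 hp1 hpInt hP h0 h1 hq1meas hbig1
      obtain ⟨hI2, hE2⟩ := swap_Ioi_main hp0 hp1 hpInt hP h0 h1 hq2meas hbig2
      have hA1 := sqIic_int hmeasP h0 h1 hint3 hint4 hmeasF₁ hL hubA₁
      have hA2 := sqIic_int hmeasP h0 h1 hint3 hint4 hmeasF₂ hL hubA₂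
      have hB1 := sqIoi_int hmeasP h0 h1 hint3 hint4 hmeasF₁ hR hubB₁
      have hB2 := sqIoi_int hmeasP h0 h1 hint3 hint4 hmeasF₂ hR hubB₂
      have hdiff : ∀ x, p x * ((∫ τ in Iic x, (F₁ τ)^2) + ∫ τ in Ioi x, (F₁ τ - 1)^2)
          - p x * ((∫ τ in Iic x, (F₂ τ)^2) + ∫ τ in Ioi x, (F₂ τ - 1)^2)
          = 4 * (p x * ∫ τ in Iic x, P τ * Γ τ)
            + 4 * (p x * ∫ τ in Ioi x, (P τ - 1) * Γ τ) := by
        intro x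
        have d1 : (∫ τ in Iic x, (F₁ τ)^2) - ∫ τ in Iic x, (F₂ τ)^2
            = 4 * ∫ τ in Iic x, P τ * Γ τ := by
          rw [← integral_sub (hA1 x) (hA2 x), ← integral_const_mul]
          exact setIntegral_congr_fun measurableSet_Iic fun τ _ => by
            rw [hF₁ τ, hF₂ τ]; ring
        have d2 : (∫ τ in Ioi x, (F₁ τ - 1)^2) - ∫ τ in Ioi x, (F₂ τ - 1)^2
            = 4 * ∫ τ in Ioi x, (P τ - 1) * Γ τ := by
          rw [← integral_sub (hB1 x) (hB2 x), ← integral_const_mul]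
          exact setIntegral_congr_fun measurableSet_Ioi fun τ _ => by
            rw [hF₁ τ, hF₂ τ]; ring
        linear_combination (p x) * d1 + (p x) * d2
      have hi1 : Integrable (fun τ => (P τ * Γ τ) * (1 - P τ)) := by
        refine Integrable.mono' hbig1
          ((hq1meas.mul (measurable_const.sub hmeasP)).aestronglyMeasurable)
          (ae_of_all _ fun τ => ?_)
        rw [Real.norm_eq_abs, abs_mul, abs_of_nonneg (by linarith [h1 τ] : (0:ℝ) ≤ 1 - P τ)]
      have hi2 : Integrable (fun τ => ((P τ - 1) * Γ τ) * P τ) := by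
        refine Integrable.mono' hbig2
          ((hq2meas.mul hmeasP).aestronglyMeasurable)
          (ae_of_all _ fun τ => ?_)
        rw [Real.norm_eq_abs, abs_mul, abs_of_nonneg (h0 τ)]
      have hz : (∫ τ, (P τ * Γ τ) * (1 - P τ)) + ∫ τ, ((P τ - 1) * Γ τ) * P τ = 0 := by
        rw [← integral_add hi1 hi2]
        have he : (fun τ => (P τ * Γ τ) * (1 - P τ) + ((P τ - 1) * Γ τ) * P τ)
            = fun _ => (0:ℝ) := funext fun τ => by ring
        rw [he, integral_zero]
      have key : (∫ x, p x * ((∫ τ in Iic x, (F₁ τ)^2) + ∫ τ in Ioi x, (F₁ τ - 1)^2))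
          - ∫ x, p x * ((∫ τ in Iic x, (F₂ τ)^2) + ∫ τ in Ioi x, (F₂ τ - 1)^2) = 0 := by
        rw [← integral_sub hint1 hint2]
        rw [integral_congr_ae (ae_of_all _ hdiff)]
        rw [integral_add (hI1.const_mul 4) (hI2.const_mul 4), integral_const_mul,
          integral_const_mul, hE1, hE2]
        linarith [hz]
      linarith [key]
    · exact absurd (contra_LnR hp0 hp1 hpInt hP hint3 hint4 hmeasF₁ hlbA₁ hlbB₁ hubA₁ hubB₁
        hint1 hL hR) not_false
  · by_cases hR : IntegrableOn (fun τ => 1 - P τ) (Ioi 0)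
    · exact absurd (contra_nLR hp0 hp1 hpInt hP hint3 hint4 hmeasF₁ hlbA₁ hlbB₁ hubA₁ hubB₁
        hint1 hL hR) not_false
    · have e1 := fun x => integral_undef
        (sqIic_nonint hmeasP h0 h1 hint3 hint4 hmeasF₁ hL hlbA₁ x)
      have e2 := fun x => integral_undef
        (sqIic_nonint hmeasP h0 h1 hint3 hint4 hmeasF₂ hL hlbA₂ x)
      have e3 := fun x => integral_undef
        (sqIoi_nonint hmeasP h0 h1 hint3 hint4 hmeasF₁ hR hlbB₁ x)
      have e4 := fun x => integral_undef
        (sqIoi_nonint hmeasP h0 h1 hint3 hint4 hmeasF₂ hR hlbB₂ x)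
      have he : (fun x => p x * ((∫ τ in Iic x, (F₁ τ)^2) + ∫ τ in Ioi x, (F₁ τ - 1)^2))
          = fun x => p x * ((∫ τ in Iic x, (F₂ τ)^2) + ∫ τ in Ioi x, (F₂ τ - 1)^2) :=
        funext fun x => by rw [e1 x, e2 x, e3 x, e4 x]
      rw [he]
end

section
/- Let p be a square-integrable probability density with p(-x) ≥ p(x) for x ≥ 0, and γ a square-integrable odd function with γ(x) ≤ 0 for x ≥ 0 and |γ(x)| < p(x). Then the expected spherical score of f₊ = p + γ is at most that of f₋ = p - γ: -⟨f₊, p⟩/‖f₊‖₂ ≤ -⟨f₋, p⟩/‖f₋‖₂. That is, the spherical scoring rule prefers f₊. -/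
open MeasureTheory Real

/-- The spherical scoring rule prefers the forecast f₊ = p + γ over
f₋ = p - γ under the stated symmetry and sign hypotheses. -/
theorem spherical_prefers_fplus (p γ : ℝ → ℝ)
    (hp0 : ∀ x, 0 ≤ p x) (hp1 : ∫ x, p x = 1)
    (hpL2 : MeasureTheory.MemLp p 2 (volume : Measure ℝ))
    (hγL2 : MeasureTheory.MemLp γ 2 (volume : Measure ℝ))
    (hsym : ∀ x : ℝ, 0 ≤ x → p x ≤ p (-x))
    (hodd : ∀ x : ℝ, γ (-x) = -γ x)
    (hγneg : ∀ x : ℝ, 0 ≤ x → γ x ≤ 0)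
    (hγlt : ∀ x : ℝ, |γ x| < p x) :
    -(∫ x, (p x + γ x) * p x) / Real.sqrt (∫ x, (p x + γ x)^2)
      ≤ -(∫ x, (p x - γ x) * p x) / Real.sqrt (∫ x, (p x - γ x)^2) := by
  -- product integrability from L²
  have hmul : ∀ f g : ℝ → ℝ, MemLp f 2 volume → MemLp g 2 volume →
      Integrable (fun x => f x * g x) volume := by
    intro f g hf hg
    have h : MemLp (f • g) 1 volume :=
      hg.smul hf
    have := memLp_one_iff_integrable.mp h
    exact this
  have ipp : Integrable (fun x => p x * p x) volume := hmul p p hpL2 hpL2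
  have igp : Integrable (fun x => γ x * p x) volume := hmul γ p hγL2 hpL2
  have igg : Integrable (fun x => γ x * γ x) volume := hmul γ γ hγL2 hγL2
  set A := ∫ x, p x * p x with hA
  set B := ∫ x, γ x * p x with hBdef
  set C := ∫ x, γ x * γ x with hC
  -- compute the four integrals
  have hplus_num : ∫ x, (p x + γ x) * p x = A + B := by
    have e : ∀ x, (p x + γ x) * p x = p x * p x + γ x * p x := fun x => by ring
    simp_rw [e]; exact integral_add ipp igp
  have hminus_num : ∫ x, (p x - γ x) * p x = A - B := by
    have e : ∀ x, (p x - γ x) * p x = p x * p x - γ x * p x := fun x => by ring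
    simp_rw [e]; exact integral_sub ipp igp
  have hplus_sq : ∫ x, (p x + γ x)^2 = A + 2*B + C := by
    have e : ∀ x, (p x + γ x)^2 = (p x * p x + 2 * (γ x * p x)) + γ x * γ x :=
      fun x => by ring
    simp_rw [e]
    have i1 : Integrable (fun x => p x * p x + 2 * (γ x * p x)) volume :=
      ipp.add (igp.const_mul 2)
    have i2 : Integrable (fun x => 2 * (γ x * p x)) volume := igp.const_mul 2
    rw [integral_add i1 igg, integral_add ipp i2, integral_const_mul]
  have hminus_sq : ∫ x, (p x - γ x)^2 = A - 2*B + C := by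
    have e : ∀ x, (p x - γ x)^2 = (p x * p x - 2 * (γ x * p x)) + γ x * γ x :=
      fun x => by ring
    simp_rw [e]
    have i1 : Integrable (fun x => p x * p x - 2 * (γ x * p x)) volume :=
      ipp.sub (igp.const_mul 2)
    have i2 : Integrable (fun x => 2 * (γ x * p x)) volume := igp.const_mul 2
    rw [integral_add i1 igg, integral_sub ipp i2, integral_const_mul]
  -- B ≥ 0, using oddness of γ and the symmetry of p
  have hB : 0 ≤ B := by
    have hcomp : Integrable (fun x => γ (-x) * p (-x)) volume := igp.comp_neg
    have h2 : ∫ x, (γ x * p x + γ (-x) * p (-x)) = B + B := by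
      rw [integral_add igp hcomp]
      congr 1
      exact integral_neg_eq_self (fun x => γ x * p x) volume
    have hnn : ∀ x, 0 ≤ γ x * p x + γ (-x) * p (-x) := by
      intro x
      rcases le_total 0 x with hx | hx
      · have h1 := hγneg x hx; have h2 := hsym x hx
        rw [hodd x]; nlinarith [hp0 x, hp0 (-x)]
      · have hx' : 0 ≤ -x := by linarith
        have h1 := hγneg (-x) hx'; have h2 := hsym (-x) hx'
        have h3 : γ x = -γ (-x) := by rw [← hodd (-x), neg_neg]
        rw [neg_neg] at h2
        rw [h3]; nlinarith [hp0 x, hp0 (-x)]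
    have h0 : (0:ℝ) ≤ ∫ x, (γ x * p x + γ (-x) * p (-x)) :=
      integral_nonneg hnn
    rw [h2] at h0; linarith
  -- positivity of integrals of everywhere-positive integrable functions
  have hposInt : ∀ f : ℝ → ℝ, Integrable f volume → (∀ x, 0 < f x) →
      0 < ∫ x, f x := by
    intro f hi hpos
    rw [integral_pos_iff_support_of_nonneg (fun x => (hpos x).le) hi]
    have hs : Function.support f = Set.univ :=
      Set.eq_univ_of_forall (fun x => (hpos x).ne')
    rw [hs, Real.volume_univ]
    exact ENNReal.zero_lt_top
  have hCnn : 0 ≤ C := integral_nonneg (fun x => mul_self_nonneg _)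
  -- A > C  (since γ² < p² pointwise)
  have hAC : 0 < A - C := by
    have hi : Integrable (fun x => p x * p x - γ x * γ x) volume := ipp.sub igg
    have hpos : ∀ x, 0 < p x * p x - γ x * γ x := by
      intro x
      have h1 := hγlt x
      have h2 := abs_nonneg (γ x)
      nlinarith [abs_mul_abs_self (γ x)]
    have := hposInt _ hi hpos
    rwa [integral_sub ipp igg] at this
  have hApos : 0 < A := by linarith
  -- positivity of the denominators
  have hS1 : 0 < A + 2*B + C := by
    rw [← hplus_sq]
    have hi : Integrable (fun x => (p x + γ x)^2) volume := by
      have := (hpL2.add hγL2).integrable_sq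
      simpa using this
    refine hposInt _ hi fun x => ?_
    have h := abs_lt.mp (hγlt x)
    have : 0 < p x + γ x := by linarith [h.1]
    positivity
  have hS2 : 0 < A - 2*B + C := by
    rw [← hminus_sq]
    have hi : Integrable (fun x => (p x - γ x)^2) volume := by
      have := (hpL2.sub hγL2).integrable_sq
      simpa using this
    refine hposInt _ hi fun x => ?_
    have h := abs_lt.mp (hγlt x)
    have : 0 < p x - γ x := by linarith [h.2]
    positivity
  -- numerators are nonnegative
  have hAmB : 0 ≤ A - B := by
    rw [← hminus_num]
    refine integral_nonneg fun x => ?_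
    have h := abs_lt.mp (hγlt x)
    have : 0 ≤ p x - γ x := by linarith [h.2]
    exact mul_nonneg this (hp0 x)
  have hApB : 0 ≤ A + B := by
    rw [← hplus_num]
    refine integral_nonneg fun x => ?_
    have h := abs_lt.mp (hγlt x)
    have : 0 ≤ p x + γ x := by linarith [h.1]
    exact mul_nonneg this (hp0 x)
  -- Cauchy–Schwarz: B² ≤ A·C
  have hCS : B^2 ≤ A * C := by
    have e : ∀ x, (γ x - (B/A) * p x)^2
        = (γ x * γ x - (2*(B/A)) * (γ x * p x)) + (B/A)^2 * (p x * p x) :=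
      fun x => by ring
    have hval : ∫ x, (γ x - (B/A) * p x)^2 = C - 2*(B/A)*B + (B/A)^2*A := by
      simp_rw [e]
      have i1 : Integrable (fun x => γ x * γ x - 2*(B/A) * (γ x * p x)) volume :=
        igg.sub (igp.const_mul (2*(B/A)))
      have i2 : Integrable (fun x => (B/A)^2 * (p x * p x)) volume :=
        ipp.const_mul ((B/A)^2)
      have i3 : Integrable (fun x => 2*(B/A) * (γ x * p x)) volume :=
        igp.const_mul (2*(B/A))
      rw [integral_add i1 i2, integral_sub igg i3, integral_const_mul,
        integral_const_mul]
    have h0 : 0 ≤ C - 2*(B/A)*B + (B/A)^2*A := by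
      rw [← hval]; exact integral_nonneg fun x => sq_nonneg _
    have h1 : 0 ≤ (C - 2*(B/A)*B + (B/A)^2*A) * A := mul_nonneg h0 hApos.le
    have h2 : (C - 2*(B/A)*B + (B/A)^2*A) * A = A*C - B^2 := by
      field_simp
      ring
    rw [h2] at h1
    linarith
  -- put everything together
  rw [hplus_num, hminus_num, hplus_sq, hminus_sq, neg_div, neg_div, neg_le_neg_iff,
    div_le_div_iff₀ (Real.sqrt_pos.mpr hS2) (Real.sqrt_pos.mpr hS1)]
  have h1 : 0 ≤ (A - B) * Real.sqrt (A + 2*B + C) :=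
    mul_nonneg hAmB (Real.sqrt_nonneg _)
  have h2 : 0 ≤ (A + B) * Real.sqrt (A - 2*B + C) :=
    mul_nonneg hApB (Real.sqrt_nonneg _)
  have hsq : ((A - B) * Real.sqrt (A + 2*B + C))^2
      ≤ ((A + B) * Real.sqrt (A - 2*B + C))^2 := by
    rw [mul_pow, mul_pow, Real.sq_sqrt hS1.le, Real.sq_sqrt hS2.le]
    have key : 0 ≤ B * (A*C - B^2) := mul_nonneg hB (by linarith)
    nlinarith [key]
  calc (A - B) * Real.sqrt (A + 2*B + C)
      = Real.sqrt (((A - B) * Real.sqrt (A + 2*B + C))^2) := (Real.sqrt_sq h1).symm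
    _ ≤ Real.sqrt (((A + B) * Real.sqrt (A - 2*B + C))^2) := Real.sqrt_le_sqrt hsq
    _ = (A + B) * Real.sqrt (A - 2*B + C) := Real.sqrt_sq h2
end
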